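/- arXiv:1911.09165 — 9 statements merged into one kernel-verified Lean document; each statement's English description precedes it below -/
import Mathlib

section
/- Let G = (V,E,w) be a weighted graph and k ≥ 2, and let λ_k be the minimum weight of a k-cut (a set of edges whose removal leaves at least k connected components). Set λ̄_k = λ_k/k. Then the number of vertex subsets S with ∅ ≠ S ≠ V and w(∂S) < λ̄_k is at most 2^{k-1}. -/
open Classical

/-- The simple graph underlying a weight function: an edge wherever the weight
is positive (in both directions). -/
def graphOf {V : Type*} (w : V → V → ℝ) : SimpleGraph V where
  Adj u v := u ≠ v ∧ 0 < w u v ∧ 0 < w v u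
  symm := by
    constructor
    intro u v h
    exact ⟨Ne.symm h.1, h.2.2, h.2.1⟩
  loopless := by
    constructor
    intro u h
    exact h.1 rfl

/-- The weight of an unordered pair of vertices (symmetrized). -/
noncomputable def edgeW {V : Type*} (w : V → V → ℝ) : Sym2 V → ℝ :=
  Sym2.lift ⟨fun u v => (w u v + w v u) / 2, fun u v => by dsimp only; rw [add_comm]⟩

/-- The total weight of a set of (unordered) edges. -/
noncomputable def cutW {V : Type*} (w : V → V → ℝ) (D : Finset (Sym2 V)) : ℝ :=
  ∑ e ∈ D, edgeW w e

/-- `D` is a `k`-cut: a set of edges of the graph whose deletion leaves at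
least `k` connected components. -/
def IsKCut {V : Type*} (w : V → V → ℝ) (k : ℕ) (D : Finset (Sym2 V)) : Prop :=
  (D : Set (Sym2 V)) ⊆ (graphOf w).edgeSet ∧
    k ≤ Nat.card ((graphOf w).deleteEdges ↑D).ConnectedComponent

/-- `w(∂S)`: the total weight of edges with exactly one endpoint in `S`. -/
noncomputable def bweight {V : Type*} [Fintype V] [DecidableEq V]
    (w : V → V → ℝ) (S : Finset V) : ℝ :=
  ∑ u ∈ S, ∑ v ∈ Sᶜ, w u v

section Aux
set_option linter.unusedSectionVars false
variable {V : Type*} [Fintype V] [DecidableEq V]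

/-- signature of a vertex w.r.t. a family of sets -/
def sigT (T : Finset (Finset V)) (v : V) : Finset (Finset V) := T.filter (fun S => v ∈ S)

def sigsT (T : Finset (Finset V)) : Finset (Finset (Finset V)) := Finset.univ.image (sigT T)

lemma sig_mem (T : Finset (Finset V)) (v : V) : sigT T v ∈ sigsT T :=
  Finset.mem_image_of_mem _ (Finset.mem_univ v)

lemma sigsT_empty [Nonempty V] : (sigsT (∅ : Finset (Finset V))).card = 1 := by
  have : sigsT (∅ : Finset (Finset V)) = {∅} := by
    apply Finset.eq_singleton_iff_nonempty_unique_mem.2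
    constructor
    · exact ⟨sigT ∅ (Classical.arbitrary V), sig_mem _ _⟩
    · intro A hA
      simp only [sigsT, Finset.mem_image] at hA
      obtain ⟨v, -, rfl⟩ := hA
      simp [sigT]
  rw [this, Finset.card_singleton]

/-- greedy step lemma: adding a set that splits a class increases # classes -/
lemma sigs_insert_card (T : Finset (Finset V)) (S₀ : Finset V) (u v : V)
    (huv : sigT T u = sigT T v) (hu : u ∈ S₀) (hv : v ∉ S₀) :
    (sigsT T).card + 1 ≤ (sigsT (insert S₀ T)).card := by
  have hS₀T : S₀ ∉ T := by
    intro h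
    have : S₀ ∈ sigT T u := Finset.mem_filter.2 ⟨h, hu⟩
    rw [huv] at this
    exact hv (Finset.mem_filter.1 this).2
  have hS₀sig : ∀ x : V, S₀ ∉ sigT T x := by
    intro x hx; exact hS₀T (Finset.mem_filter.1 hx).1
  have key : ∀ x : V, sigT (insert S₀ T) x = if x ∈ S₀ then insert S₀ (sigT T x) else sigT T x := by
    intro x
    simp only [sigT, Finset.filter_insert]
  have herase : ∀ x : V, (sigT (insert S₀ T) x).erase S₀ = sigT T x := by
    intro x
    rw [key]
    by_cases hx : x ∈ S₀
    · rw [if_pos hx, Finset.erase_insert (hS₀sig x)]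
    · rw [if_neg hx, Finset.erase_eq_of_notMem (hS₀sig x)]
  set a := sigT (insert S₀ T) u with ha
  set b := sigT (insert S₀ T) v with hb
  have hab : a ≠ b := by
    have h1 : S₀ ∈ a := by rw [ha, key, if_pos hu]; exact Finset.mem_insert_self _ _
    have h2 : S₀ ∉ b := by rw [hb, key, if_neg hv]; exact hS₀sig v
    intro h; rw [h] at h1; exact h2 h1
  have hfeq : a.erase S₀ = b.erase S₀ := by rw [herase, herase, huv]
  have himg : sigsT T = Finset.image (fun A => A.erase S₀) ((sigsT (insert S₀ T)).erase a) := by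
    apply Finset.Subset.antisymm
    · intro A hA
      simp only [sigsT, Finset.mem_image] at hA
      obtain ⟨x, -, rfl⟩ := hA
      rcases eq_or_ne (sigT (insert S₀ T) x) a with hxa | hxa
      · refine Finset.mem_image.2 ⟨b, Finset.mem_erase.2 ⟨hab.symm, sig_mem _ v⟩, ?_⟩
        rw [← hfeq, ← hxa, herase]
      · refine Finset.mem_image.2 ⟨sigT (insert S₀ T) x, Finset.mem_erase.2 ⟨hxa, sig_mem _ x⟩, herase x⟩
    · intro A hA
      simp only [Finset.mem_image] at hA
      obtain ⟨B, hB, rfl⟩ := hA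
      have := (Finset.mem_erase.1 hB).2
      simp only [sigsT, Finset.mem_image] at this ⊢
      obtain ⟨x, -, rfl⟩ := this
      exact ⟨x, Finset.mem_univ x, (herase x).symm⟩
  have h1 : (sigsT T).card ≤ ((sigsT (insert S₀ T)).erase a).card := by
    rw [himg]; exact Finset.card_image_le
  have h2 : ((sigsT (insert S₀ T)).erase a).card = (sigsT (insert S₀ T)).card - 1 :=
    Finset.card_erase_of_mem (sig_mem _ u)
  have h3 : 1 ≤ (sigsT (insert S₀ T)).card :=
    Finset.card_pos.2 ⟨a, sig_mem _ u⟩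
  omega

/-- counting lemma: if every S in F respects the sig-partition of T, then F is small -/
lemma card_le_of_respects (T : Finset (Finset V)) (F : Finset (Finset V))
    (hresp : ∀ S ∈ F, ∀ x y : V, sigT T x = sigT T y → x ∈ S → y ∈ S) :
    F.card ≤ 2 ^ (sigsT T).card := by
  have hmaps : ∀ S ∈ F, S.image (sigT T) ∈ (sigsT T).powerset := by
    intro S _
    refine Finset.mem_powerset.2 ?_
    intro A hA
    obtain ⟨x, -, rfl⟩ := Finset.mem_image.1 hA
    exact sig_mem _ x
  have hinj : Set.InjOn (fun S : Finset V => S.image (sigT T)) (F : Set (Finset V)) := by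
    intro S1 h1 S2 h2 heq
    simp only at heq
    ext x
    constructor
    · intro hx
      have : sigT T x ∈ S2.image (sigT T) := by
        rw [← heq]; exact Finset.mem_image_of_mem _ hx
      obtain ⟨y, hy, hxy⟩ := Finset.mem_image.1 this
      exact hresp S2 h2 y x hxy hy
    · intro hx
      have : sigT T x ∈ S1.image (sigT T) := by
        rw [heq]; exact Finset.mem_image_of_mem _ hx
      obtain ⟨y, hy, hxy⟩ := Finset.mem_image.1 this
      exact hresp S1 h1 y x hxy hy
  have this := Finset.card_le_card_of_injOn (fun S : Finset V => S.image (sigT T)) hmaps hinj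
  calc F.card ≤ ((sigsT T).powerset).card := this
    _ = 2 ^ (sigsT T).card := Finset.card_powerset _

lemma greedy [Nonempty V] (k : ℕ) (hk : 2 ≤ k) (F : Finset (Finset V))
    (hF : 2 ^ (k - 1) < F.card) :
    ∃ T ⊆ F, T.card ≤ k - 1 ∧ k ≤ (sigsT T).card := by
  have main : ∀ j : ℕ, ∃ T ⊆ F, T.card ≤ j ∧ min (j + 1) k ≤ (sigsT T).card := by
    intro j
    induction j with
    | zero =>
      refine ⟨∅, Finset.empty_subset F, le_refl 0, ?_⟩
      rw [sigsT_empty]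
      omega
    | succ j ih =>
      obtain ⟨T, hTF, hTcard, hTsigs⟩ := ih
      by_cases hbig : k ≤ (sigsT T).card
      · exact ⟨T, hTF, hTcard.trans (Nat.le_succ j), le_trans (min_le_right _ _) hbig⟩
      push_neg at hbig
      have ht : j + 1 ≤ (sigsT T).card := by omega
      -- find S₀ ∈ F not respecting the partition
      have : ¬ (∀ S ∈ F, ∀ x y : V, sigT T x = sigT T y → x ∈ S → y ∈ S) := by
        intro hresp
        have h1 := card_le_of_respects T F hresp
        have h2 : 2 ^ (sigsT T).card ≤ 2 ^ (k - 1) :=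
          Nat.pow_le_pow_right (by norm_num) (by omega)
        omega
      push_neg at this
      obtain ⟨S₀, hS₀F, x, y, hxy, hx, hy⟩ := this
      refine ⟨insert S₀ T, ?_, ?_, ?_⟩
      · exact Finset.insert_subset hS₀F hTF
      · exact (Finset.card_insert_le _ _).trans (by omega)
      · have := sigs_insert_card T S₀ x y hxy hx hy
        omega
  obtain ⟨T, hTF, hTcard, hTsigs⟩ := main (k - 1)
  refine ⟨T, hTF, hTcard, ?_⟩
  have : min (k - 1 + 1) k = k := by omega
  omega




noncomputable def cutEdges (w : V → V → ℝ) (S : Finset V) : Finset (Sym2 V) :=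
  ((S ×ˢ Sᶜ).filter (fun p => (graphOf w).Adj p.1 p.2)).image (fun p => s(p.1, p.2))

lemma edgeW_nonneg {w : V → V → ℝ} (hnn : ∀ u v, 0 ≤ w u v) (e : Sym2 V) :
    0 ≤ edgeW w e := by
  induction e using Sym2.ind with
  | _ u v =>
    show 0 ≤ (w u v + w v u) / 2
    have := hnn u v; have := hnn v u; linarith

lemma edgeW_pos {w : V → V → ℝ} {e : Sym2 V} (he : e ∈ (graphOf w).edgeSet) :
    0 < edgeW w e := by
  induction e using Sym2.ind with
  | _ u v =>
    rw [SimpleGraph.mem_edgeSet] at he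
    obtain ⟨-, h1, h2⟩ := he
    show 0 < (w u v + w v u) / 2
    linarith

lemma cutEdges_subset (w : V → V → ℝ) (S : Finset V) :
    (cutEdges w S : Set (Sym2 V)) ⊆ (graphOf w).edgeSet := by
  intro e he
  simp only [cutEdges, Finset.coe_image, Set.mem_image, Finset.mem_coe,
    Finset.mem_filter] at he
  obtain ⟨p, ⟨-, hadj⟩, rfl⟩ := he
  exact hadj

lemma mem_cutEdges {w : V → V → ℝ} {S : Finset V} {u v : V}
    (hadj : (graphOf w).Adj u v) (hu : u ∈ S) (hv : v ∉ S) :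
    s(u, v) ∈ cutEdges w S := by
  refine Finset.mem_image.2 ⟨(u, v), Finset.mem_filter.2 ⟨?_, hadj⟩, rfl⟩
  exact Finset.mem_product.2 ⟨hu, Finset.mem_compl.2 hv⟩

lemma cutW_cutEdges_le {w : V → V → ℝ} (hsymm : ∀ u v, w u v = w v u)
    (hnn : ∀ u v, 0 ≤ w u v) (S : Finset V) :
    cutW w (cutEdges w S) ≤ bweight w S := by
  have hinj : Set.InjOn (fun p : V × V => s(p.1, p.2))
      ((S ×ˢ Sᶜ).filter (fun p => (graphOf w).Adj p.1 p.2) : Finset (V × V)) := by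
    intro p hp q hq heq
    simp only [Finset.coe_filter, Set.mem_setOf_eq, Finset.mem_product,
      Finset.mem_compl] at hp hq
    simp only [Sym2.eq, Sym2.rel_iff', Prod.mk.injEq, Prod.swap_prod_mk] at heq
    obtain ⟨⟨hp1, hp2⟩, -⟩ := hp
    obtain ⟨⟨hq1, hq2⟩, -⟩ := hq
    rcases heq with ⟨h1, h2⟩ | ⟨h1, h2⟩
    · exact Prod.ext h1 h2
    · exfalso; exact hq2 (h1 ▸ hp1)
  have h1 : cutW w (cutEdges w S)
      = ∑ p ∈ (S ×ˢ Sᶜ).filter (fun p => (graphOf w).Adj p.1 p.2), w p.1 p.2 := by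
    rw [cutW, cutEdges, Finset.sum_image (fun p hp q hq => hinj hp hq)]
    apply Finset.sum_congr rfl
    intro p _
    show (w p.1 p.2 + w p.2 p.1) / 2 = w p.1 p.2
    rw [hsymm p.2 p.1]; ring
  rw [h1, bweight, ← Finset.sum_product']
  apply Finset.sum_le_sum_of_subset_of_nonneg (Finset.filter_subset _ _)
  intro p _ _
  exact hnn p.1 p.2

lemma sum_union_le_real {α : Type*} [DecidableEq α] (A B : Finset α) (f : α → ℝ)
    (hf : ∀ x, 0 ≤ f x) :
    ∑ x ∈ A ∪ B, f x ≤ ∑ x ∈ A, f x + ∑ x ∈ B, f x := by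
  have h := Finset.sum_union_inter (s₁ := A) (s₂ := B) (f := f)
  have h2 : 0 ≤ ∑ x ∈ A ∩ B, f x := Finset.sum_nonneg fun x _ => hf x
  linarith

lemma cutW_biUnion_le {w : V → V → ℝ} (hnn : ∀ u v, 0 ≤ w u v)
    (T : Finset (Finset V)) :
    cutW w (T.biUnion (cutEdges w)) ≤ ∑ S ∈ T, cutW w (cutEdges w S) := by
  induction T using Finset.induction_on with
  | empty => simp [cutW]
  | @insert S T' hS ih =>
    rw [Finset.biUnion_insert, Finset.sum_insert hS]
    calc cutW w (cutEdges w S ∪ T'.biUnion (cutEdges w))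
        ≤ cutW w (cutEdges w S) + cutW w (T'.biUnion (cutEdges w)) :=
          sum_union_le_real _ _ _ (edgeW_nonneg hnn)
      _ ≤ _ := by linarith



lemma sig_eq_of_adj {w : V → V → ℝ} (T : Finset (Finset V)) {u v : V}
    (h : ((graphOf w).deleteEdges ↑(T.biUnion (cutEdges w))).Adj u v) :
    sigT T u = sigT T v := by
  rw [SimpleGraph.deleteEdges_adj] at h
  obtain ⟨hadj, hnm⟩ := h
  by_contra hne
  apply hnm
  rw [Finset.mem_coe, Finset.mem_biUnion]
  have : ¬ ∀ S ∈ T, (u ∈ S ↔ v ∈ S) := by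
    intro hall
    exact hne (Finset.filter_congr hall)
  push_neg at this
  obtain ⟨S, hS, hiff⟩ := this
  rcases hiff with ⟨hu, hv⟩ | ⟨hu, hv⟩
  · exact ⟨S, hS, mem_cutEdges hadj hu hv⟩
  · refine ⟨S, hS, ?_⟩
    rw [Sym2.eq_swap]
    exact mem_cutEdges hadj.symm hv hu
  
lemma sig_eq_of_reachable {w : V → V → ℝ} (T : Finset (Finset V)) {u v : V}
    (h : ((graphOf w).deleteEdges ↑(T.biUnion (cutEdges w))).Reachable u v) :
    sigT T u = sigT T v := by
  obtain ⟨p⟩ := h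
  induction p with
  | nil => rfl
  | cons hadj _ ih => exact (sig_eq_of_adj T hadj).trans ih

lemma card_sigs_le (w : V → V → ℝ) (T : Finset (Finset V)) :
    (sigsT T).card ≤
      Nat.card ((graphOf w).deleteEdges ↑(T.biUnion (cutEdges w))).ConnectedComponent := by
  set G' := (graphOf w).deleteEdges ↑(T.biUnion (cutEdges w))
  let f : G'.ConnectedComponent → {A // A ∈ sigsT T} :=
    Quot.lift (fun v => ⟨sigT T v, sig_mem T v⟩)
      (fun a b hab => Subtype.ext (sig_eq_of_reachable T hab))
  have hsurj : Function.Surjective f := by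
    rintro ⟨A, hA⟩
    obtain ⟨v, -, rfl⟩ := Finset.mem_image.1 hA
    exact ⟨G'.connectedComponentMk v, rfl⟩
  calc (sigsT T).card = Nat.card {A // A ∈ sigsT T} := (Nat.card_eq_finsetCard _).symm
    _ ≤ Nat.card G'.ConnectedComponent := Nat.card_le_card_of_surjective f hsurj



end Aux

/-- In a connected weighted graph, the number of nonempty proper vertex subsets
`S` with `w(∂S) < λ_k / k` is at most `2^(k-1)`. -/
theorem stmt_3 {V : Type*} [Fintype V] [DecidableEq V]
    (w : V → V → ℝ) (hsymm : ∀ u v, w u v = w v u) (hnn : ∀ u v, 0 ≤ w u v)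
    (hconn : (graphOf w).Connected)
    (k : ℕ) (hk : 2 ≤ k) (lam : ℝ)
    (hach : ∃ D, IsKCut w k D ∧ cutW w D = lam)
    (hmin : ∀ D, IsKCut w k D → lam ≤ cutW w D) :
    ((Finset.univ : Finset (Finset V)).filter
        (fun S => S ≠ ∅ ∧ S ≠ Finset.univ ∧ bweight w S < lam / k)).card ≤
      2 ^ (k - 1) := by
  classical
  by_contra hlt
  rw [not_le] at hlt
  set F := ((Finset.univ : Finset (Finset V)).filter
      (fun S => S ≠ ∅ ∧ S ≠ Finset.univ ∧ bweight w S < lam / k)) with hFdef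
  have hV : Nonempty V := hconn.nonempty
  obtain ⟨D₀, hD₀, hD₀w⟩ := hach
  have hD₀ne : D₀.Nonempty := by
    rcases Finset.eq_empty_or_nonempty D₀ with h | h
    · exfalso
      have h2 := hD₀.2
      rw [h] at h2
      simp only [Finset.coe_empty, SimpleGraph.deleteEdges_empty] at h2
      have h1 : Nat.card (graphOf w).ConnectedComponent = 1 :=
        Nat.card_eq_one_iff_unique.2 ⟨hconn.preconnected.subsingleton_connectedComponent,
          ⟨(graphOf w).connectedComponentMk (Classical.arbitrary V)⟩⟩
      omega
    · exact h
  have hlam : 0 < lam := by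
    rw [← hD₀w]
    exact Finset.sum_pos (fun e he => edgeW_pos (hD₀.1 (Finset.mem_coe.2 he))) hD₀ne
  obtain ⟨T, hTF, hTcard, hTsigs⟩ := greedy k hk F hlt
  set D := T.biUnion (cutEdges w) with hDdef
  have hDsub : (D : Set (Sym2 V)) ⊆ (graphOf w).edgeSet := by
    intro e he
    rw [Finset.mem_coe, Finset.mem_biUnion] at he
    obtain ⟨S, hS, heS⟩ := he
    exact cutEdges_subset w S (Finset.mem_coe.2 heS)
  have hDcut : IsKCut w k D := ⟨hDsub, le_trans hTsigs (card_sigs_le w T)⟩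
  have hTne : T.Nonempty := by
    rcases Finset.eq_empty_or_nonempty T with h | h
    · exfalso
      rw [h] at hTsigs
      rw [sigsT_empty] at hTsigs
      omega
    · exact h
  have hbw : ∀ S ∈ T, bweight w S < lam / k := by
    intro S hS
    have := Finset.mem_filter.1 (hTF hS)
    exact this.2.2.2
  have hk0 : (0:ℝ) < (k:ℝ) := by exact_mod_cast Nat.lt_of_lt_of_le Nat.zero_lt_two hk
  have hfinal : cutW w D < lam := by
    have hdiv : 0 < lam / (k:ℝ) := div_pos hlam hk0
    calc cutW w D ≤ ∑ S ∈ T, cutW w (cutEdges w S) := cutW_biUnion_le hnn T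
      _ ≤ ∑ S ∈ T, bweight w S :=
          Finset.sum_le_sum (fun S _ => cutW_cutEdges_le hsymm hnn S)
      _ < ∑ _S ∈ T, (lam / k) := Finset.sum_lt_sum_of_nonempty hTne hbw
      _ = T.card * (lam / k) := by rw [Finset.sum_const, nsmul_eq_mul]
      _ ≤ ((k - 1 : ℕ) : ℝ) * (lam / k) := by
          apply mul_le_mul_of_nonneg_right _ (le_of_lt hdiv)
          exact_mod_cast hTcard
      _ < lam := by
          have h1 : ((k - 1 : ℕ) : ℝ) = (k : ℝ) - 1 := by
            have hk1 : 1 ≤ k := by omega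
            push_cast [hk1]
            ring
          have h2 : (k:ℝ) * (lam / k) = lam := by
            field_simp
          rw [h1]
          nlinarith [hdiv]
  have := hmin D hDcut
  linarith
end

section
/- Let G be a connected weighted graph, k ≥ 2, λ_k the minimum k-cut weight, and λ̄_k = λ_k/k. Fix 1 ≤ γ < 2 and let F = {S ⊆ V : ∅ ≠ S ≠ V, w(∂S) ≤ γ·λ̄_k}. Then for any integer r > 2γ/(2−γ) + 1, the family F does not contain 2^k many (r+k−2)-sunflowers with pairwise distinct nonempty cores. -/
open Classical

/-- `𝒮` is an `r`-sunflower with core `C`. -/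
def IsSunflower {α : Type*} [DecidableEq α] (𝒮 : Finset (Finset α)) (r : ℕ)
    (C : Finset α) : Prop :=
  𝒮.card = r ∧ ∀ A ∈ 𝒮, ∀ B ∈ 𝒮, A ≠ B → A ∩ B = C

/-- `F` contains `s` many `r`-sunflowers with pairwise distinct nonempty cores. -/
def HasDistinctSunflowers {α : Type*} [DecidableEq α] (F : Finset (Finset α))
    (s r : ℕ) : Prop :=
  ∃ (T : Fin s → Finset (Finset α)) (C : Fin s → Finset α),
    (∀ i, T i ⊆ F ∧ IsSunflower (T i) r (C i) ∧ C i ≠ ∅) ∧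
    Function.Injective C

/- ======================  Auxiliary development  ====================== -/

namespace Stmt4Aux

open Finset

set_option linter.unusedSectionVars false

variable {V : Type*} [Fintype V] [DecidableEq V]

/-- Directed cross weight between two vertex sets. -/
noncomputable def crossW (w : V → V → ℝ) (A B : Finset V) : ℝ :=
  ∑ u ∈ A, ∑ v ∈ B, w u v

lemma bweight_eq (w : V → V → ℝ) (S : Finset V) : bweight w S = crossW w S Sᶜ := rfl

lemma crossW_nonneg {w : V → V → ℝ} (hnn : ∀ u v, 0 ≤ w u v) (A B : Finset V) :
    0 ≤ crossW w A B :=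
  Finset.sum_nonneg fun _ _ => Finset.sum_nonneg fun _ _ => hnn _ _

lemma bweight_nonneg {w : V → V → ℝ} (hnn : ∀ u v, 0 ≤ w u v) (S : Finset V) :
    0 ≤ bweight w S := crossW_nonneg hnn _ _

lemma crossW_comm {w : V → V → ℝ} (hsymm : ∀ u v, w u v = w v u) (A B : Finset V) :
    crossW w A B = crossW w B A := by
  unfold crossW
  rw [Finset.sum_comm]
  exact Finset.sum_congr rfl fun v _ => Finset.sum_congr rfl fun u _ => hsymm u v

lemma crossW_union_right {w : V → V → ℝ} {B C : Finset V} (A : Finset V)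
    (hd : Disjoint B C) : crossW w A (B ∪ C) = crossW w A B + crossW w A C := by
  unfold crossW
  rw [← Finset.sum_add_distrib]
  exact Finset.sum_congr rfl fun u _ => Finset.sum_union hd

lemma crossW_union_left {w : V → V → ℝ} {A B : Finset V} (C : Finset V)
    (hd : Disjoint A B) : crossW w (A ∪ B) C = crossW w A C + crossW w B C := by
  unfold crossW
  exact Finset.sum_union hd

lemma crossW_mono_right {w : V → V → ℝ} (hnn : ∀ u v, 0 ≤ w u v) {B B' : Finset V}
    (A : Finset V) (h : B ⊆ B') : crossW w A B ≤ crossW w A B' :=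
  Finset.sum_le_sum fun u _ =>
    Finset.sum_le_sum_of_subset_of_nonneg h (fun v _ _ => hnn u v)

lemma edgeW_mk (w : V → V → ℝ) (u v : V) : edgeW w s(u, v) = (w u v + w v u) / 2 := rfl

lemma edgeW_nonneg {w : V → V → ℝ} (hnn : ∀ u v, 0 ≤ w u v) (e : Sym2 V) :
    0 ≤ edgeW w e := by
  induction e using Sym2.ind with
  | _ u v =>
    rw [edgeW_mk]
    have := hnn u v; have := hnn v u; linarith

/-- `e` has one endpoint in `S` and the other outside. -/
def Crosses (S : Finset V) (e : Sym2 V) : Prop :=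
  ∃ u v, e = s(u, v) ∧ u ∈ S ∧ v ∉ S

lemma sum_crossing_le_bweight {w : V → V → ℝ} (hsymm : ∀ u v, w u v = w v u)
    (hnn : ∀ u v, 0 ≤ w u v) (S : Finset V) (D : Finset (Sym2 V))
    (hD : ∀ e ∈ D, Crosses S e) :
    ∑ e ∈ D, edgeW w e ≤ bweight w S := by
  have hsub : D ⊆ (S ×ˢ Sᶜ).image (fun p => s(p.1, p.2)) := by
    intro e he
    obtain ⟨u, v, rfl, hu, hv⟩ := hD e he
    exact Finset.mem_image.mpr ⟨(u, v), Finset.mem_product.mpr ⟨hu, by simpa⟩, rfl⟩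
  have hinj : Set.InjOn (fun p : V × V => s(p.1, p.2)) (S ×ˢ Sᶜ) := by
    rintro ⟨a, b⟩ hab ⟨c, d⟩ hcd h
    simp only [Finset.coe_product, Set.mem_prod, Finset.mem_coe, Finset.mem_compl] at hab hcd
    simp only [Sym2.eq, Sym2.rel_iff', Prod.mk.injEq, Prod.swap_prod_mk] at h
    rcases h with ⟨rfl, rfl⟩ | ⟨rfl, rfl⟩
    · rfl
    · exact absurd hab.1 hcd.2
  calc ∑ e ∈ D, edgeW w e
      ≤ ∑ e ∈ (S ×ˢ Sᶜ).image (fun p => s(p.1, p.2)), edgeW w e :=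
        Finset.sum_le_sum_of_subset_of_nonneg hsub (fun e _ _ => edgeW_nonneg hnn e)
    _ = ∑ p ∈ S ×ˢ Sᶜ, edgeW w s(p.1, p.2) := by
        refine Finset.sum_image fun x hx y hy hxy => hinj ?_ ?_ hxy
        · simpa using hx
        · simpa using hy
    _ = ∑ p ∈ S ×ˢ Sᶜ, w p.1 p.2 := by
        refine Finset.sum_congr rfl fun p _ => ?_
        rw [edgeW_mk, hsymm p.2 p.1]; ring
    _ = bweight w S := by
        rw [bweight_eq, crossW]
        exact Finset.sum_product S Sᶜ (fun p => w p.1 p.2)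

lemma cut_le_sum_bweights {w : V → V → ℝ} (hsymm : ∀ u v, w u v = w v u)
    (hnn : ∀ u v, 0 ≤ w u v) {ι : Type*} (I : Finset ι) (p : ι → Finset V)
    (D : Finset (Sym2 V)) (hcov : ∀ e ∈ D, ∃ i ∈ I, Crosses (p i) e) :
    ∑ e ∈ D, edgeW w e ≤ ∑ i ∈ I, bweight w (p i) := by
  classical
  calc ∑ e ∈ D, edgeW w e
      ≤ ∑ e ∈ D, ∑ i ∈ I, (if Crosses (p i) e then edgeW w e else 0) := by
        refine Finset.sum_le_sum fun e he => ?_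
        obtain ⟨i, hi, hc⟩ := hcov e he
        refine le_trans (le_of_eq (if_pos hc).symm)
          (Finset.single_le_sum
            (f := fun j => if Crosses (p j) e then edgeW w e else 0) (fun j _ => ?_) hi)
        split
        · exact edgeW_nonneg hnn e
        · exact le_refl 0
    _ = ∑ i ∈ I, ∑ e ∈ D, (if Crosses (p i) e then edgeW w e else 0) := Finset.sum_comm
    _ ≤ ∑ i ∈ I, bweight w (p i) := by
        refine Finset.sum_le_sum fun i _ => ?_
        rw [← Finset.sum_filter]
        exact sum_crossing_le_bweight hsymm hnn _ _
          (fun e he => (Finset.mem_filter.mp he).2)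

section KCut

variable {β : Type*} [DecidableEq β]

/-- The set of graph edges whose endpoints get different signatures. -/
noncomputable def sigCut (w : V → V → ℝ) (sig : V → β) : Finset (Sym2 V) :=
  @Finset.filter _
    (fun e => e ∈ (graphOf w).edgeSet ∧
      Sym2.lift ⟨fun u v => sig u ≠ sig v, fun u v => propext ne_comm⟩ e)
    (fun _ => Classical.propDecidable _) Finset.univ

lemma mem_sigCut {w : V → V → ℝ} {sig : V → β} {u v : V} :
    s(u, v) ∈ sigCut w sig ↔ (graphOf w).Adj u v ∧ sig u ≠ sig v := by
  unfold sigCut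
  rw [@Finset.mem_filter _ _ (fun _ => Classical.propDecidable _)]
  simp [SimpleGraph.mem_edgeSet]

lemma sigCut_isKCut (w : V → V → ℝ) (sig : V → β) (k : ℕ)
    (himg : k ≤ (Finset.univ.image sig).card) : IsKCut w k (sigCut w sig) := by
  constructor
  · intro e he
    rw [Finset.mem_coe] at he
    unfold sigCut at he
    exact ((@Finset.mem_filter _ _ (fun _ => Classical.propDecidable _) _ _).mp he).2.1
  · -- reachability in the cut graph preserves the signature
    have key : ∀ u v : V, ((graphOf w).deleteEdges ↑(sigCut w sig)).Reachable u v →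
        sig u = sig v := by
      intro u v h
      obtain ⟨p⟩ := h
      induction p with
      | nil => rfl
      | @cons a b c hadj p ih =>
        have h1 : sig a = sig b := by
          rw [SimpleGraph.deleteEdges_adj] at hadj
          by_contra hne
          exact hadj.2 (Finset.mem_coe.mpr (mem_sigCut.mpr ⟨hadj.1, hne⟩))
        exact h1.trans ih
    set G' := (graphOf w).deleteEdges ↑(sigCut w sig) with hG'
    have hex : ∀ b : {x // x ∈ Finset.univ.image sig}, ∃ u : V, sig u = b.1 := by
      rintro ⟨b, hb⟩
      obtain ⟨u, _, rfl⟩ := Finset.mem_image.mp hb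
      exact ⟨u, rfl⟩
    let f : {x // x ∈ Finset.univ.image sig} → G'.ConnectedComponent := fun b =>
      G'.connectedComponentMk (Classical.choose (hex b))
    have hfinj : Function.Injective f := by
      intro b1 b2 hf
      have hreach := (SimpleGraph.ConnectedComponent.eq).mp hf
      have e1 := Classical.choose_spec (hex b1)
      have e2 := Classical.choose_spec (hex b2)
      exact Subtype.ext (e1 ▸ e2 ▸ key _ _ hreach)
    calc k ≤ (Finset.univ.image sig).card := himg
      _ = Nat.card {x // x ∈ Finset.univ.image sig} :=
          (Nat.card_eq_finsetCard _).symm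
      _ ≤ Nat.card G'.ConnectedComponent := Nat.card_le_card_of_injective f hfinj

/-- Main interface: a signature with at least `k` values whose cut is covered
by parts gives a lower bound by `lam`. -/
lemma lam_le_sum_bweights {w : V → V → ℝ} (hsymm : ∀ u v, w u v = w v u)
    (hnn : ∀ u v, 0 ≤ w u v) {k : ℕ} {lam : ℝ}
    (hmin : ∀ D, IsKCut w k D → lam ≤ cutW w D)
    (sig : V → β) (himg : k ≤ (Finset.univ.image sig).card)
    {ι : Type*} (I : Finset ι) (p : ι → Finset V)
    (hcov : ∀ u v : V, (graphOf w).Adj u v → sig u ≠ sig v →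
      ∃ i ∈ I, Crosses (p i) s(u, v)) :
    lam ≤ ∑ i ∈ I, bweight w (p i) := by
  refine le_trans (hmin _ (sigCut_isKCut w sig k himg)) ?_
  rw [cutW]
  refine cut_le_sum_bweights hsymm hnn I p _ ?_
  intro e he
  induction e using Sym2.ind with
  | _ u v =>
    have h := mem_sigCut.mp he
    exact hcov u v h.1 h.2

end KCut

/-- A cheapest `n`-subset is at most the average. -/
lemma exists_min_avg {α : Type*} [DecidableEq α] (N : Finset α) (f : α → ℝ) (n : ℕ)
    (hn : n ≤ N.card) :
    ∃ T ⊆ N, T.card = n ∧ (N.card : ℝ) * ∑ a ∈ T, f a ≤ (n : ℝ) * ∑ a ∈ N, f a := by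
  obtain ⟨T, hT, hminT⟩ := Finset.exists_min_image (N.powersetCard n)
    (fun T => ∑ a ∈ T, f a) (Finset.powersetCard_nonempty.mpr hn)
  obtain ⟨hTN, hTcard⟩ := Finset.mem_powersetCard.mp hT
  refine ⟨T, hTN, hTcard, ?_⟩
  have hpt : ∀ A ∈ T, ∀ B ∈ N \ T, f A ≤ f B := by
    intro A hA B hB
    obtain ⟨hBN, hBT⟩ := Finset.mem_sdiff.mp hB
    have hT' : insert B (T.erase A) ∈ N.powersetCard n := by
      rw [Finset.mem_powersetCard]
      constructor
      · intro x hx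
        rcases Finset.mem_insert.mp hx with rfl | hx
        · exact hBN
        · exact hTN (Finset.mem_of_mem_erase hx)
      · have hApos : 1 ≤ T.card := Finset.card_pos.mpr ⟨A, hA⟩
        rw [Finset.card_insert_of_notMem (fun h => hBT (Finset.mem_of_mem_erase h)),
          Finset.card_erase_of_mem hA]
        omega
    have := hminT _ hT'
    rw [Finset.sum_insert (fun h => hBT (Finset.mem_of_mem_erase h)),
      Finset.sum_erase_eq_sub hA] at this
    linarith [this]
  have h1 : ((N \ T).card : ℝ) * ∑ a ∈ T, f a ≤ (n : ℝ) * ∑ a ∈ N \ T, f a := by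
    have h2 : ∀ B ∈ N \ T, ∑ a ∈ T, f a ≤ (n : ℝ) * f B := by
      intro B hB
      calc ∑ a ∈ T, f a ≤ ∑ _a ∈ T, f B := Finset.sum_le_sum fun a ha => hpt a ha B hB
        _ = (n : ℝ) * f B := by rw [Finset.sum_const, hTcard, nsmul_eq_mul]
    calc ((N \ T).card : ℝ) * ∑ a ∈ T, f a = ∑ _B ∈ N \ T, ∑ a ∈ T, f a := by
          rw [Finset.sum_const, nsmul_eq_mul]
      _ ≤ ∑ B ∈ N \ T, (n : ℝ) * f B := Finset.sum_le_sum h2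
      _ = (n : ℝ) * ∑ a ∈ N \ T, f a := by rw [Finset.mul_sum]
  have hsplit : ∑ a ∈ N \ T, f a + ∑ a ∈ T, f a = ∑ a ∈ N, f a := Finset.sum_sdiff hTN
  have hcard : ((N \ T).card : ℝ) = (N.card : ℝ) - (n : ℝ) := by
    rw [Finset.card_sdiff_of_subset hTN, hTcard]
    push_cast [Nat.cast_sub hn]
    ring
  rw [hcard] at h1
  nlinarith [h1, hsplit]

section Cells

/-- Signatures of vertices with respect to a family of sets. -/
noncomputable def sigF (G : Finset (Finset V)) : V → Finset (Finset V) :=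
  fun v => G.filter (fun A => v ∈ A)

/-- Number of cells (atoms) of a family of sets. -/
noncomputable def ncells (G : Finset (Finset V)) : ℕ :=
  (Finset.univ.image (sigF G)).card

lemma sigF_subset {G G' : Finset (Finset V)} (h : G ⊆ G') (v : V) :
    sigF G v = (sigF G' v).filter (· ∈ G) := by
  ext A
  simp only [sigF, Finset.mem_filter]
  constructor
  · rintro ⟨h1, h2⟩; exact ⟨⟨h h1, h2⟩, h1⟩
  · rintro ⟨⟨_, h2⟩, h3⟩; exact ⟨h3, h2⟩

lemma image_sig_eq {G G' : Finset (Finset V)} (h : G ⊆ G') :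
    Finset.univ.image (sigF G) =
      (Finset.univ.image (sigF G')).image (fun s => s.filter (· ∈ G)) := by
  rw [Finset.image_image]
  exact Finset.image_congr fun v _ => sigF_subset h v

lemma ncells_mono {G G' : Finset (Finset V)} (h : G ⊆ G') : ncells G ≤ ncells G' := by
  rw [ncells, image_sig_eq h, ncells]
  exact Finset.card_image_le

lemma ncells_empty (hV : Nonempty V) : ncells (∅ : Finset (Finset V)) = 1 := by
  have : sigF (∅ : Finset (Finset V)) = fun _ => (∅ : Finset (Finset V)) := by
    funext v; simp [sigF]
  rw [ncells, this]
  rw [Finset.image_const (Finset.univ_nonempty) _]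
  simp

lemma exists_splitter {G H : Finset (Finset V)} (hGH : G ⊆ H)
    (hlt : ncells G < ncells H) :
    ∃ Cs ∈ H, ncells G < ncells (insert Cs G) := by
  by_contra hcon
  push_neg at hcon
  have hns : ∀ Cs ∈ H, ∀ u v : V, sigF G u = sigF G v → (u ∈ Cs ↔ v ∈ Cs) := by
    intro Cs hCs u v huv
    have hsub : G ⊆ insert Cs G := Finset.subset_insert _ _
    have hle : ncells (insert Cs G) ≤ ncells G := hcon Cs hCs
    have hinj : Set.InjOn (fun s : Finset (Finset V) => s.filter (· ∈ G))
        ↑(Finset.univ.image (sigF (insert Cs G))) := by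
      apply Finset.injOn_of_card_image_eq
      rw [← image_sig_eq hsub]
      exact le_antisymm (ncells_mono hsub) hle
    have h1 : sigF (insert Cs G) u = sigF (insert Cs G) v := by
      apply hinj (Finset.mem_coe.mpr (Finset.mem_image_of_mem _ (Finset.mem_univ u)))
        (Finset.mem_coe.mpr (Finset.mem_image_of_mem _ (Finset.mem_univ v)))
      simp only
      rw [← sigF_subset hsub u, ← sigF_subset hsub v, huv]
    have h2 : Cs ∈ sigF (insert Cs G) u ↔ Cs ∈ sigF (insert Cs G) v := by rw [h1]
    simpa [sigF, Finset.mem_filter, Finset.mem_insert] using h2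
  have hfin : ncells H ≤ ncells G := by
    rw [ncells, ncells]
    apply Finset.card_le_card_of_injOn (fun s => s.filter (· ∈ G))
    · intro s hs
      obtain ⟨v, _, rfl⟩ := Finset.mem_image.mp hs
      dsimp only
      rw [← sigF_subset hGH v]
      exact Finset.mem_image_of_mem _ (Finset.mem_univ v)
    · intro s1 hs1 s2 hs2 heq
      obtain ⟨u, _, rfl⟩ := Finset.mem_image.mp hs1
      obtain ⟨v, _, rfl⟩ := Finset.mem_image.mp hs2
      simp only at heq
      rw [← sigF_subset hGH u, ← sigF_subset hGH v] at heq
      ext A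
      simp only [sigF, Finset.mem_filter]
      constructor
      · rintro ⟨hA, hu⟩; exact ⟨hA, (hns A hA u v heq).mp hu⟩
      · rintro ⟨hA, hv⟩; exact ⟨hA, (hns A hA u v heq).mpr hv⟩
  omega

lemma exists_generating (hV : Nonempty V) (H : Finset (Finset V)) (n : ℕ) :
    ∃ G ⊆ H, G.card ≤ n ∧ min (n + 1) (ncells H) ≤ ncells G := by
  induction n with
  | zero =>
    refine ⟨∅, Finset.empty_subset _, by simp, ?_⟩
    rw [ncells_empty hV]
    exact le_trans (min_le_left _ _) (by norm_num)
  | succ n ih =>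
    obtain ⟨G, hGH, hcard, hmin⟩ := ih
    by_cases hc : min (n + 2) (ncells H) ≤ ncells G
    · exact ⟨G, hGH, by omega, hc⟩
    · push_neg at hc
      have hlt : ncells G < ncells H := lt_of_lt_of_le hc (min_le_right _ _)
      obtain ⟨Cs, hCs, hsplit⟩ := exists_splitter hGH hlt
      refine ⟨insert Cs G, Finset.insert_subset hCs hGH,
        le_trans (Finset.card_insert_le _ _) (by omega), ?_⟩
      have hn1 : n + 1 ≤ ncells G := by omega
      calc min (n + 2) (ncells H) ≤ n + 2 := min_le_left _ _
        _ ≤ ncells (insert Cs G) := by omega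

lemma card_le_pow_ncells (H : Finset (Finset V)) : H.card ≤ 2 ^ ncells H := by
  calc H.card ≤ (Finset.univ.image (sigF H)).powerset.card := by
        apply Finset.card_le_card_of_injOn (fun A => A.image (sigF H))
        · intro A _
          exact Finset.mem_powerset.mpr (Finset.image_subset_image (Finset.subset_univ A))
        · intro A hA B hB heq
          simp only at heq
          have key : ∀ X ∈ H, ∀ Y ∈ H, X.image (sigF H) ⊆ Y.image (sigF H) → X ⊆ Y := by
            intro X hX Y hY hsub u hu
            have : sigF H u ∈ Y.image (sigF H) := hsub (Finset.mem_image_of_mem _ hu)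
            obtain ⟨v, hv, hvu⟩ := Finset.mem_image.mp this
            have h2 : Y ∈ sigF H v ↔ Y ∈ sigF H u := by rw [hvu]
            simp only [sigF, Finset.mem_filter] at h2
            exact (h2.mp ⟨hY, hv⟩).2
          exact le_antisymm (key _ hA _ hB (le_of_eq heq)) (key _ hB _ hA (le_of_eq heq.symm))
    _ = 2 ^ ncells H := by rw [Finset.card_powerset, ncells]

end Cells

/-- Key bound for the core of a sunflower of small cuts. -/
lemma core_bound {w : V → V → ℝ} (hsymm : ∀ u v, w u v = w v u) (hnn : ∀ u v, 0 ≤ w u v)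
    {k : ℕ} {lam : ℝ} (hk : 2 ≤ k)
    (hmin : ∀ D, IsKCut w k D → lam ≤ cutW w D) (hlam : 0 ≤ lam)
    {γ : ℝ} {m : ℕ} (hm : k + 2 ≤ m)
    {𝒮 : Finset (Finset V)} {C : Finset V}
    (hF : ∀ A ∈ 𝒮, bweight w A ≤ γ * (lam / k))
    (hcard : 𝒮.card = m)
    (hsun : ∀ A ∈ 𝒮, ∀ B ∈ 𝒮, A ≠ B → A ∩ B = C)
    (hC : C.Nonempty) :
    ((m : ℝ) - 2) * bweight w C + ((m : ℝ) - 1) * lam / ((k : ℝ) - 1)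
      ≤ (m : ℝ) * γ * (lam / k) := by
  classical
  have hCsub : ∀ A ∈ 𝒮, C ⊆ A := by
    intro A hA
    obtain ⟨B, hB, hBA⟩ := Finset.exists_mem_ne (by omega : 1 < 𝒮.card) A
    rw [← hsun A hA B hB (Ne.symm hBA)]
    exact Finset.inter_subset_left
  have hdisj : ∀ A ∈ 𝒮, ∀ B ∈ 𝒮, A ≠ B → Disjoint (A \ C) (B \ C) := by
    intro A hA B hB hAB
    rw [Finset.disjoint_left]
    intro x hxA hxB
    have hx : x ∈ A ∩ B := Finset.mem_inter.mpr
      ⟨(Finset.mem_sdiff.mp hxA).1, (Finset.mem_sdiff.mp hxB).1⟩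
    rw [hsun A hA B hB hAB] at hx
    exact (Finset.mem_sdiff.mp hxA).2 hx
  have hsplitid : ∀ A ∈ 𝒮, bweight w A
      = bweight w C + bweight w (A \ C) - 2 * crossW w C (A \ C) := by
    intro A hA
    have h1 : C ∪ (A \ C) = A := Finset.union_sdiff_of_subset (hCsub A hA)
    have hd1 : Disjoint C (A \ C) := Finset.disjoint_sdiff
    have hCc : Cᶜ = (A \ C) ∪ Aᶜ := by
      ext x
      simp only [Finset.mem_compl, Finset.mem_union, Finset.mem_sdiff]
      constructor
      · intro h
        by_cases hx : x ∈ A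
        · exact Or.inl ⟨hx, h⟩
        · exact Or.inr hx
      · rintro (⟨_, h⟩ | h)
        · exact h
        · exact fun hc => h (hCsub A hA hc)
    have hPc : (A \ C)ᶜ = C ∪ Aᶜ := by
      ext x
      simp only [Finset.mem_compl, Finset.mem_union, Finset.mem_sdiff]
      constructor
      · intro h
        by_cases hx : x ∈ C
        · exact Or.inl hx
        · exact Or.inr (fun hA' => h ⟨hA', hx⟩)
      · rintro (h | h)
        · exact fun hc => hc.2 h
        · exact fun hc => h hc.1
    have hd2 : Disjoint (A \ C) Aᶜ := by
      rw [Finset.disjoint_left]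
      intro x hx hc
      exact (Finset.mem_compl.mp hc) ((Finset.mem_sdiff.mp hx).1)
    have hd3 : Disjoint C Aᶜ := by
      rw [Finset.disjoint_left]
      intro x hx hc
      exact (Finset.mem_compl.mp hc) (hCsub A hA hx)
    have e1 : bweight w A = crossW w C Aᶜ + crossW w (A \ C) Aᶜ := by
      rw [bweight_eq, ← crossW_union_left Aᶜ hd1, h1]
    have e2 : bweight w C = crossW w C (A \ C) + crossW w C Aᶜ := by
      rw [bweight_eq, hCc, crossW_union_right _ hd2]
    have e3 : bweight w (A \ C) = crossW w (A \ C) C + crossW w (A \ C) Aᶜ := by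
      rw [bweight_eq, hPc, crossW_union_right _ hd3]
    have e4 : crossW w (A \ C) C = crossW w C (A \ C) := crossW_comm hsymm _ _
    linarith [e1, e2, e3, e4]
  have hcross : ∑ A ∈ 𝒮, crossW w C (A \ C) ≤ bweight w C := by
    have hswap : ∑ A ∈ 𝒮, crossW w C (A \ C)
        = ∑ u ∈ C, ∑ A ∈ 𝒮, ∑ v ∈ A \ C, w u v := by
      unfold crossW
      rw [Finset.sum_comm]
    have hpd : (↑𝒮 : Set (Finset V)).PairwiseDisjoint (· \ C) := by
      intro A hA B hB hAB
      exact hdisj A hA B hB hAB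
    have hbi : ∀ u ∈ C, ∑ A ∈ 𝒮, ∑ v ∈ A \ C, w u v ≤ ∑ v ∈ Cᶜ, w u v := by
      intro u _
      rw [← Finset.sum_biUnion hpd]
      apply Finset.sum_le_sum_of_subset_of_nonneg
      · intro x hx
        obtain ⟨A, _, hxA⟩ := Finset.mem_biUnion.mp hx
        exact Finset.mem_compl.mpr (Finset.mem_sdiff.mp hxA).2
      · exact fun v _ _ => hnn u v
    calc ∑ A ∈ 𝒮, crossW w C (A \ C) = ∑ u ∈ C, ∑ A ∈ 𝒮, ∑ v ∈ A \ C, w u v := hswap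
      _ ≤ ∑ u ∈ C, ∑ v ∈ Cᶜ, w u v := Finset.sum_le_sum hbi
      _ = bweight w C := rfl
  have hsum1 : ((m : ℝ) - 2) * bweight w C + ∑ A ∈ 𝒮, bweight w (A \ C)
      ≤ (m : ℝ) * γ * (lam / k) := by
    have h1 : ∑ A ∈ 𝒮, bweight w A ≤ (m : ℝ) * (γ * (lam / k)) := by
      calc ∑ A ∈ 𝒮, bweight w A ≤ ∑ _A ∈ 𝒮, γ * (lam / k) := Finset.sum_le_sum hF
        _ = (𝒮.card : ℝ) * (γ * (lam / k)) := by rw [Finset.sum_const, nsmul_eq_mul]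
        _ = (m : ℝ) * (γ * (lam / k)) := by rw [hcard]
    have h2 : ∑ A ∈ 𝒮, bweight w A
        = (m : ℝ) * bweight w C + ∑ A ∈ 𝒮, bweight w (A \ C)
          - 2 * ∑ A ∈ 𝒮, crossW w C (A \ C) := by
      rw [Finset.sum_congr rfl hsplitid, Finset.sum_sub_distrib, Finset.sum_add_distrib,
        Finset.sum_const, nsmul_eq_mul, hcard, ← Finset.mul_sum]
    nlinarith [hcross, h1, h2]
  set N := 𝒮.filter (fun A => ¬ A = C) with hN
  have hNsub : N ⊆ 𝒮 := Finset.filter_subset _ _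
  have hNcard : m - 1 ≤ N.card := by
    have h1 : (𝒮.filter (fun A => A = C)).card ≤ 1 := by
      calc (𝒮.filter (fun A => A = C)).card ≤ ({C} : Finset (Finset V)).card := by
            apply Finset.card_le_card
            intro x hx
            exact Finset.mem_singleton.mpr (Finset.mem_filter.mp hx).2
        _ = 1 := Finset.card_singleton C
    have h2 := Finset.card_filter_add_card_filter_not (s := 𝒮) (p := fun A => A = C)
    rw [← hN] at h2
    omega
  obtain ⟨T, hTN, hTcard, havg⟩ :=
    exists_min_avg N (fun A => bweight w (A \ C)) (k - 1)
      (le_trans (by omega : k - 1 ≤ m - 1) hNcard)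
  have hTmem : ∀ A ∈ T, A ∈ 𝒮 ∧ A ≠ C := by
    intro A hA
    have := Finset.mem_filter.mp (hTN hA)
    exact ⟨this.1, this.2⟩
  have hpart : lam ≤ ∑ A ∈ T, bweight w (A \ C) := by
    set sig : V → Finset (Finset V) := fun v => T.filter (fun A => v ∈ A \ C) with hsig
    have hsig_pet : ∀ A ∈ T, ∀ v ∈ A \ C, sig v = {A} := by
      intro A hA v hv
      ext B
      simp only [hsig, Finset.mem_filter, Finset.mem_singleton]
      constructor
      · rintro ⟨hBT, hvB⟩
        by_contra hne
        exact Finset.disjoint_left.mp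
          (hdisj B (hTmem B hBT).1 A (hTmem A hA).1 hne) hvB hv
      · rintro rfl
        exact ⟨hA, hv⟩
    have himg : k ≤ (Finset.univ.image sig).card := by
      have hsub : insert (∅ : Finset (Finset V))
          (T.image (fun A => ({A} : Finset (Finset V)))) ⊆ Finset.univ.image sig := by
        intro x hx
        rcases Finset.mem_insert.mp hx with rfl | hx
        · obtain ⟨c, hc⟩ := hC
          refine Finset.mem_image.mpr ⟨c, Finset.mem_univ c, ?_⟩
          rw [Finset.eq_empty_iff_forall_notMem]
          intro B hB
          have := Finset.mem_filter.mp hB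
          exact (Finset.mem_sdiff.mp this.2).2 hc
        · obtain ⟨A, hA, rfl⟩ := Finset.mem_image.mp hx
          have hAne : A ≠ C := (hTmem A hA).2
          have hACsub : C ⊆ A := hCsub A (hTmem A hA).1
          have hne : (A \ C).Nonempty := by
            rw [Finset.sdiff_nonempty]
            intro hsub'
            exact hAne (Finset.Subset.antisymm hsub' hACsub)
          obtain ⟨v, hv⟩ := hne
          exact Finset.mem_image.mpr ⟨v, Finset.mem_univ v, hsig_pet A hA v hv⟩
      have hninsert : (∅ : Finset (Finset V)) ∉ T.image (fun A => ({A} : Finset (Finset V))) := by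
        intro hmem
        obtain ⟨A, _, hAeq⟩ := Finset.mem_image.mp hmem
        exact Finset.singleton_ne_empty A hAeq
      have hcard2 : (insert (∅ : Finset (Finset V))
          (T.image (fun A => ({A} : Finset (Finset V))))).card = k := by
        rw [Finset.card_insert_of_notMem hninsert,
          Finset.card_image_of_injective _ (fun A B h => Finset.singleton_injective h), hTcard]
        omega
      calc k = _ := hcard2.symm
        _ ≤ _ := Finset.card_le_card hsub
    apply lam_le_sum_bweights hsymm hnn hmin sig himg T (fun A => A \ C)
    intro u v _ hne
    by_cases hu : sig u = ∅
    · have hv : sig v ≠ ∅ := fun h => hne (hu.trans h.symm)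
      obtain ⟨A, hA⟩ := Finset.nonempty_iff_ne_empty.mpr hv
      have h1 := Finset.mem_filter.mp hA
      refine ⟨A, h1.1, v, u, Sym2.eq_swap, h1.2, ?_⟩
      intro huA
      rw [hsig_pet A h1.1 u huA] at hu
      exact Finset.singleton_ne_empty A hu
    · obtain ⟨A, hA⟩ := Finset.nonempty_iff_ne_empty.mpr hu
      have h1 := Finset.mem_filter.mp hA
      refine ⟨A, h1.1, u, v, rfl, h1.2, ?_⟩
      intro hvA
      exact hne ((hsig_pet A h1.1 u h1.2).trans (hsig_pet A h1.1 v hvA).symm)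
  -- combine
  have hk1 : (0 : ℝ) < (k : ℝ) - 1 := by
    have : (2 : ℝ) ≤ (k : ℝ) := by exact_mod_cast hk
    linarith
  have hNcast : ((m : ℝ) - 1) ≤ (N.card : ℝ) := by
    have : ((m - 1 : ℕ) : ℝ) ≤ (N.card : ℝ) := by exact_mod_cast hNcard
    rw [Nat.cast_sub (by omega)] at this
    simpa using this
  have hkcast : ((k - 1 : ℕ) : ℝ) = (k : ℝ) - 1 := by
    rw [Nat.cast_sub (by omega)]
    simp
  have hsumN : ((m : ℝ) - 1) * lam ≤ ((k : ℝ) - 1) * ∑ A ∈ N, bweight w (A \ C) := by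
    have s1 : ((m : ℝ) - 1) * lam ≤ (N.card : ℝ) * lam :=
      mul_le_mul_of_nonneg_right hNcast hlam
    have s2 : (N.card : ℝ) * lam ≤ (N.card : ℝ) * ∑ A ∈ T, bweight w (A \ C) :=
      mul_le_mul_of_nonneg_left hpart (by positivity)
    have s3 := havg
    rw [hkcast] at s3
    linarith
  have hNS : ∑ A ∈ N, bweight w (A \ C) ≤ ∑ A ∈ 𝒮, bweight w (A \ C) :=
    Finset.sum_le_sum_of_subset_of_nonneg hNsub (fun A _ _ => bweight_nonneg hnn _)
  have hdiv : ((m : ℝ) - 1) * lam / ((k : ℝ) - 1) ≤ ∑ A ∈ 𝒮, bweight w (A \ C) := by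
    rw [div_le_iff₀ hk1]
    calc ((m : ℝ) - 1) * lam ≤ ((k : ℝ) - 1) * ∑ A ∈ N, bweight w (A \ C) := hsumN
      _ ≤ ((k : ℝ) - 1) * ∑ A ∈ 𝒮, bweight w (A \ C) :=
          mul_le_mul_of_nonneg_left hNS (le_of_lt hk1)
      _ = (∑ A ∈ 𝒮, bweight w (A \ C)) * ((k : ℝ) - 1) := by ring
  linarith [hsum1, hdiv]

lemma edgeW_pos {w : V → V → ℝ} (e : Sym2 V) (he : e ∈ (graphOf w).edgeSet) :
    0 < edgeW w e := by
  induction e using Sym2.ind with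
  | _ u v =>
    rw [SimpleGraph.mem_edgeSet] at he
    obtain ⟨_, h1, h2⟩ := he
    rw [edgeW_mk]
    linarith

end Stmt4Aux

/-- Let `F` be the family of nonempty proper subsets `S` with
`w(∂S) ≤ γ·λ̄_k` where `λ̄_k = λ_k/k`.  For any `r > 2γ/(2-γ) + 1`, the family
`F` does not contain `2^k` many `(r+k-2)`-sunflowers with pairwise distinct
nonempty cores. -/
theorem stmt_4 {V : Type*} [Fintype V] [DecidableEq V]
    (w : V → V → ℝ) (hsymm : ∀ u v, w u v = w v u) (hnn : ∀ u v, 0 ≤ w u v)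
    (hconn : (graphOf w).Connected)
    (k : ℕ) (hk : 2 ≤ k) (lam : ℝ)
    (hach : ∃ D, IsKCut w k D ∧ cutW w D = lam)
    (hmin : ∀ D, IsKCut w k D → lam ≤ cutW w D)
    (γ : ℝ) (hγ1 : 1 ≤ γ) (hγ2 : γ < 2)
    (r : ℕ) (hr : 2 * γ / (2 - γ) + 1 < (r : ℝ)) :
    ¬ HasDistinctSunflowers
        ((Finset.univ : Finset (Finset V)).filter
          (fun S => S ≠ ∅ ∧ S ≠ Finset.univ ∧ bweight w S ≤ γ * (lam / k)))
        (2 ^ k) (r + k - 2) := by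
  classical
  rintro ⟨T, C, hTC, hCinj⟩
  obtain ⟨D₀, hD₀, hD₀w⟩ := hach
  have hlamnn : 0 ≤ lam := by
    rw [← hD₀w, cutW]
    exact Finset.sum_nonneg fun e _ => Stmt4Aux.edgeW_nonneg hnn e
  have hlampos : 0 < lam := by
    rw [← hD₀w, cutW]
    have hDne : D₀.Nonempty := by
      rw [Finset.nonempty_iff_ne_empty]
      intro hD0
      have h2 := hD₀.2
      rw [hD0] at h2
      simp only [Finset.coe_empty] at h2
      rw [SimpleGraph.deleteEdges_empty] at h2
      haveI hss : Subsingleton (graphOf w).ConnectedComponent := by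
        constructor
        intro c d
        induction c using SimpleGraph.ConnectedComponent.ind with
        | _ u =>
        induction d using SimpleGraph.ConnectedComponent.ind with
        | _ v =>
        exact SimpleGraph.ConnectedComponent.sound (hconn.preconnected u v)
      haveI : Nonempty (graphOf w).ConnectedComponent :=
        ⟨(graphOf w).connectedComponentMk (Classical.choice hconn.nonempty)⟩
      have h3 : Nat.card (graphOf w).ConnectedComponent = 1 := Nat.card_eq_one_iff_unique.mpr
        ⟨hss, inferInstance⟩
      omega
    obtain ⟨e, he⟩ := hDne
    refine Finset.sum_pos' (fun e' _ => Stmt4Aux.edgeW_nonneg hnn e') ⟨e, he, ?_⟩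
    exact Stmt4Aux.edgeW_pos e (hD₀.1 (Finset.mem_coe.mpr he))
  -- numeric preliminaries
  have h2γ : (0 : ℝ) < 2 - γ := by linarith
  have hr4 : 4 ≤ r := by
    by_contra hlt
    push_neg at hlt
    have hr3 : (r : ℝ) ≤ 3 := by exact_mod_cast Nat.lt_succ_iff.mp hlt
    have h1 : (2 : ℝ) ≤ 2 * γ / (2 - γ) := by
      rw [le_div_iff₀ h2γ]
      nlinarith
    linarith
  have hγr : γ * ((r : ℝ) + 1) < 2 * ((r : ℝ) - 1) := by
    have h1 : 2 * γ / (2 - γ) < (r : ℝ) - 1 := by linarith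
    rw [div_lt_iff₀ h2γ] at h1
    nlinarith
  have hK : (2 : ℝ) ≤ (k : ℝ) := by exact_mod_cast hk
  have hR : (4 : ℝ) ≤ (r : ℝ) := by exact_mod_cast hr4
  set m := r + k - 2 with hm
  have hmk : k + 2 ≤ m := by omega
  have hmcast : (m : ℝ) = (r : ℝ) + (k : ℝ) - 2 := by
    rw [hm, Nat.cast_sub (by omega : 2 ≤ r + k)]
    push_cast
    ring
  have hm2 : (0 : ℝ) < (m : ℝ) - 2 := by
    have : ((k : ℝ)) + 2 ≤ (m : ℝ) := by exact_mod_cast hmk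
    linarith
  set Bd := ((m : ℝ) * γ * (lam / k) - ((m : ℝ) - 1) * lam / ((k : ℝ) - 1)) / ((m : ℝ) - 2)
    with hBd
  have hcoreBd : ∀ i : Fin (2 ^ k), bweight w (C i) ≤ Bd := by
    intro i
    obtain ⟨hTF, ⟨hcard, hsun⟩, hCne⟩ := hTC i
    have hF : ∀ A ∈ T i, bweight w A ≤ γ * (lam / k) := by
      intro A hA
      exact (Finset.mem_filter.mp (hTF hA)).2.2.2
    have hcb := Stmt4Aux.core_bound hsymm hnn hk hmin hlamnn hmk hF hcard hsun
      (Finset.nonempty_iff_ne_empty.mpr hCne)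
    rw [hBd, le_div_iff₀ hm2]
    linarith
  have hBdnn : 0 ≤ Bd :=
    le_trans (Stmt4Aux.bweight_nonneg hnn _) (hcoreBd ⟨0, pow_pos (by norm_num) k⟩)
  set H := Finset.univ.image C with hH
  have hHcard : H.card = 2 ^ k := by
    rw [hH, Finset.card_image_of_injective _ hCinj, Finset.card_univ, Fintype.card_fin]
  have hkcells : k ≤ Stmt4Aux.ncells H := by
    have h1 := Stmt4Aux.card_le_pow_ncells H
    rw [hHcard] at h1
    exact (Nat.pow_le_pow_iff_right (by norm_num : 1 < 2)).mp h1
  obtain ⟨G, hGH, hGcard, hGmin⟩ := Stmt4Aux.exists_generating hconn.nonempty H (k - 1)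
  have hGcells : k ≤ Stmt4Aux.ncells G := by omega
  have hlamle : lam ≤ ∑ Cs ∈ G, bweight w Cs := by
    have hcov : ∀ u v : V, (graphOf w).Adj u v → Stmt4Aux.sigF G u ≠ Stmt4Aux.sigF G v →
        ∃ Cs ∈ G, Stmt4Aux.Crosses Cs s(u, v) := by
      intro u v _ hne
      have hnotall : ¬ ∀ Cs, Cs ∈ Stmt4Aux.sigF G u ↔ Cs ∈ Stmt4Aux.sigF G v :=
        fun h => hne (Finset.ext h)
      push_neg at hnotall
      obtain ⟨Cs, hCs⟩ := hnotall
      have hCsmem : ∀ x : V, Cs ∈ Stmt4Aux.sigF G x ↔ Cs ∈ G ∧ x ∈ Cs := by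
        intro x
        simp [Stmt4Aux.sigF]
      rcases hCs with ⟨h1, h2⟩ | ⟨h1, h2⟩
      · obtain ⟨hCsG, hu⟩ := (hCsmem u).mp h1
        refine ⟨Cs, hCsG, u, v, rfl, hu, ?_⟩
        intro hv
        exact h2 ((hCsmem v).mpr ⟨hCsG, hv⟩)
      · obtain ⟨hCsG, hv⟩ := (hCsmem v).mp h2
        refine ⟨Cs, hCsG, v, u, Sym2.eq_swap, hv, ?_⟩
        intro hu
        exact h1 ((hCsmem u).mpr ⟨hCsG, hu⟩)
    have := Stmt4Aux.lam_le_sum_bweights hsymm hnn hmin (Stmt4Aux.sigF G) hGcells G id hcov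
    simpa using this
  have hsumle : ∑ Cs ∈ G, bweight w Cs ≤ ((k : ℝ) - 1) * Bd := by
    have h1 : ∀ Cs ∈ G, bweight w Cs ≤ Bd := by
      intro Cs hCs
      obtain ⟨i, _, rfl⟩ := Finset.mem_image.mp (hGH hCs)
      exact hcoreBd i
    have hGk : (G.card : ℝ) ≤ (k : ℝ) - 1 := by
      have : ((k - 1 : ℕ) : ℝ) = (k : ℝ) - 1 := by
        rw [Nat.cast_sub (by omega)]
        simp
      rw [← this]
      exact_mod_cast hGcard
    calc ∑ Cs ∈ G, bweight w Cs ≤ G.card • Bd := Finset.sum_le_card_nsmul _ _ _ h1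
      _ = (G.card : ℝ) * Bd := nsmul_eq_mul _ _
      _ ≤ ((k : ℝ) - 1) * Bd := mul_le_mul_of_nonneg_right hGk hBdnn
  -- final numerical contradiction
  have hkpos : (0 : ℝ) < (k : ℝ) := by linarith
  have hk1 : (0 : ℝ) < (k : ℝ) - 1 := by linarith
  have hr1 : (0 : ℝ) < (r : ℝ) + 1 := by linarith
  have key : γ * (((k : ℝ) - 1) * (m : ℝ)) < (k : ℝ) * (2 * (m : ℝ) - 3) := by
    have hpos : (0 : ℝ) < ((k : ℝ) - 1) * (m : ℝ) := by nlinarith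
    have hpoly : 2 * ((r : ℝ) - 1) * (((k : ℝ) - 1) * (m : ℝ))
        ≤ ((r : ℝ) + 1) * ((k : ℝ) * (2 * (m : ℝ) - 3)) := by
      rw [hmcast]
      nlinarith [hK, hR, mul_nonneg (by linarith : (0:ℝ) ≤ (k : ℝ) - 2)
        (by linarith : (0:ℝ) ≤ (r : ℝ) - 4), sq_nonneg ((k : ℝ) - 2), sq_nonneg ((r : ℝ) - 4)]
    have hmul : ((r : ℝ) + 1) * (γ * (((k : ℝ) - 1) * (m : ℝ)))
        < ((r : ℝ) + 1) * ((k : ℝ) * (2 * (m : ℝ) - 3)) := by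
      have h4 := mul_lt_mul_of_pos_right hγr hpos
      calc ((r : ℝ) + 1) * (γ * (((k : ℝ) - 1) * (m : ℝ)))
          = γ * ((r : ℝ) + 1) * (((k : ℝ) - 1) * (m : ℝ)) := by ring
        _ < 2 * ((r : ℝ) - 1) * (((k : ℝ) - 1) * (m : ℝ)) := h4
        _ ≤ ((r : ℝ) + 1) * ((k : ℝ) * (2 * (m : ℝ) - 3)) := hpoly
    exact lt_of_mul_lt_mul_left hmul (le_of_lt hr1)
  have hfinal : ((k : ℝ) - 1) * Bd < lam := by
    rw [hBd, ← mul_div_assoc, div_lt_iff₀ hm2]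
    have e1 : ((k : ℝ) - 1) * (((m : ℝ) - 1) * lam / ((k : ℝ) - 1)) = ((m : ℝ) - 1) * lam := by
      field_simp
    have e2 : ((k : ℝ) - 1) * ((m : ℝ) * γ * (lam / k)) < (2 * (m : ℝ) - 3) * lam := by
      have h6 := mul_lt_mul_of_pos_right key (div_pos hlampos hkpos)
      have h7 : (k : ℝ) * (2 * (m : ℝ) - 3) * (lam / k) = (2 * (m : ℝ) - 3) * lam := by
        field_simp
      calc ((k : ℝ) - 1) * ((m : ℝ) * γ * (lam / k))
          = γ * (((k : ℝ) - 1) * (m : ℝ)) * (lam / k) := by ring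
        _ < (k : ℝ) * (2 * (m : ℝ) - 3) * (lam / k) := h6
        _ = (2 * (m : ℝ) - 3) * lam := h7
    have e3 : ((k : ℝ) - 1) * ((m : ℝ) * γ * (lam / k) - ((m : ℝ) - 1) * lam / ((k : ℝ) - 1))
        = ((k : ℝ) - 1) * ((m : ℝ) * γ * (lam / k)) - ((m : ℝ) - 1) * lam := by
      rw [mul_sub, e1]
    linarith
  linarith [hlamle, hsumle, hfinal]
end

section
/- Let G be an unweighted multigraph on n vertices and λ a positive integer. Then there exists a subgraph H of G with at most λ·n edges such that every vertex subset S with |∂_G S| ≤ λ satisfies |∂_G S| = |∂_H S|. -/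
/-- The edges of the multigraph `(V, E, ends)` with exactly one endpoint in
`S` (the edge boundary `∂S`). -/
def crossing {V E : Type*} [Fintype V] [Fintype E] [DecidableEq V] [DecidableEq E]
    (ends : E → Sym2 V) (S : Finset V) : Finset E :=
  Finset.univ.filter (fun e => ∃ u v, ends e = s(u, v) ∧ u ∈ S ∧ v ∉ S)

open Finset Relation

namespace NISparse

variable {V E : Type*} [Fintype V] [Fintype E] [DecidableEq V] [DecidableEq E]

/-- The edge relation of the edge subset `A`. -/
def erel (ends : E → Sym2 V) (A : Finset E) (u v : V) : Prop :=
  ∃ e ∈ A, ends e = s(u, v)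

/-- Connectivity via edges in `A`. -/
def linked (ends : E → Sym2 V) (A : Finset E) (u v : V) : Prop :=
  EqvGen (erel ends A) u v

lemma linked_mono {ends : E → Sym2 V} {A B : Finset E} (h : A ⊆ B) {u v : V}
    (hl : linked ends A u v) : linked ends B u v :=
  EqvGen.mono (fun _ _ ⟨e, he, hee⟩ => ⟨e, h he, hee⟩) u v hl

lemma sym2_exists (z : Sym2 V) : ∃ u v, z = s(u, v) :=
  Sym2.inductionOn z fun u v => ⟨u, v, rfl⟩

lemma mem_crossing {ends : E → Sym2 V} {S : Finset V} {e : E} {u v : V}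
    (h : ends e = s(u, v)) (hu : u ∈ S) (hv : v ∉ S) : e ∈ crossing ends S := by
  simp only [crossing, mem_filter, mem_univ, true_and]
  exact ⟨u, v, h, hu, hv⟩

lemma crossing_spec {ends : E → Sym2 V} {S : Finset V} {e : E}
    (h : e ∈ crossing ends S) : ∃ u v, ends e = s(u, v) ∧ u ∈ S ∧ v ∉ S := by
  simpa only [crossing, mem_filter, mem_univ, true_and] using h

/-- If `u` and `v` are linked via `A` and the cut `S` separates them, some edge
of `A` crosses `S`. -/
lemma exists_crossing_of_linked {ends : E → Sym2 V} {A : Finset E} {S : Finset V} {u v : V}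
    (h : linked ends A u v) (hu : u ∈ S) (hv : v ∉ S) :
    ∃ f ∈ A, f ∈ crossing ends S := by
  have key : ∀ a b : V, linked ends A a b →
      ((a ∈ S ∧ b ∉ S) ∨ (b ∈ S ∧ a ∉ S)) → ∃ f ∈ A, f ∈ crossing ends S := by
    intro a b h
    induction h with
    | rel a b hab =>
      obtain ⟨e, he, hee⟩ := hab
      rintro (⟨ha, hb⟩ | ⟨hb, ha⟩)
      · exact ⟨e, he, mem_crossing hee ha hb⟩
      · rw [Sym2.eq_swap] at hee
        exact ⟨e, he, mem_crossing hee hb ha⟩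
    | refl a => rintro (⟨h1, h2⟩ | ⟨h1, h2⟩) <;> exact absurd h1 h2
    | symm a b _ ih =>
      rintro (h | h)
      · exact ih (Or.inr h)
      · exact ih (Or.inl h)
    | trans a b c _ _ ih1 ih2 =>
      rintro (⟨ha, hc⟩ | ⟨hc, ha⟩) <;> by_cases hb : b ∈ S
      · exact ih2 (Or.inl ⟨hb, hc⟩)
      · exact ih1 (Or.inl ⟨ha, hb⟩)
      · exact ih1 (Or.inr ⟨hb, ha⟩)
      · exact ih2 (Or.inr ⟨hc, hb⟩)
  exact key u v h (Or.inl ⟨hu, hv⟩)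

/-- Number of connected components of `(V, A)`. -/
noncomputable def classes (ends : E → Sym2 V) (A : Finset E) : ℕ :=
  Nat.card (Quotient (EqvGen.setoid (erel ends A)))

lemma classes_le (ends : E → Sym2 V) (A : Finset E) :
    classes ends A ≤ Fintype.card V := by
  classical
  have : Fintype (Quotient (EqvGen.setoid (erel ends A))) := Fintype.ofFinite _
  rw [classes, Nat.card_eq_fintype_card]
  exact Fintype.card_le_of_surjective _ (fun q => q.exists_rep)

lemma classes_lt (ends : E → Sym2 V) {A B : Finset E} (hAB : A ⊆ B) {u v : V}
    (hA : ¬ linked ends A u v) (hB : linked ends B u v) :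
    classes ends B < classes ends A := by
  classical
  have : Fintype (Quotient (EqvGen.setoid (erel ends A))) := Fintype.ofFinite _
  have : Fintype (Quotient (EqvGen.setoid (erel ends B))) := Fintype.ofFinite _
  let g : Quotient (EqvGen.setoid (erel ends A)) → Quotient (EqvGen.setoid (erel ends B)) :=
    Quotient.map id (fun a b h => linked_mono hAB h)
  have hsurj : Function.Surjective g := by
    intro q
    induction q using Quotient.ind with
    | _ a => exact ⟨Quotient.mk _ a, rfl⟩
  have hninj : ¬ Function.Injective g := by
    intro hinj
    have : (Quotient.mk (EqvGen.setoid (erel ends A)) u) = Quotient.mk _ v := by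
      apply hinj
      exact Quotient.sound hB
    exact hA (Quotient.exact this)
  rw [classes, classes, Nat.card_eq_fintype_card, Nat.card_eq_fintype_card]
  exact Fintype.card_lt_of_surjective_not_injective g hsurj hninj

/-- A forest's edge count plus component count is at most the vertex count. -/
lemma forest_card (ends : E → Sym2 V) (F : Finset E)
    (hF : ∀ e ∈ F, ∀ u v, ends e = s(u, v) → ¬ linked ends (F.erase e) u v) :
    F.card + classes ends F ≤ Fintype.card V := by
  induction F using Finset.strongInduction with
  | _ F ih =>
    rcases F.eq_empty_or_nonempty with rfl | ⟨e, he⟩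
    · simpa using classes_le ends ∅
    · have hforest' : ∀ e' ∈ F.erase e, ∀ u v, ends e' = s(u, v) →
          ¬ linked ends ((F.erase e).erase e') u v := by
        intro e' he' u v huv hl
        exact hF e' (mem_of_mem_erase he') u v huv
          (linked_mono (erase_subset_erase _ (erase_subset _ _)) hl)
      have herase := ih (F.erase e) (erase_ssubset he) hforest'
      obtain ⟨u, v, huv⟩ := sym2_exists (ends e)
      have hlt : classes ends F < classes ends (F.erase e) :=
        classes_lt ends (erase_subset _ _) (hF e he u v huv)
          (EqvGen.rel _ _ ⟨e, he, huv⟩)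
      have hcard : F.card = (F.erase e).card + 1 := (card_erase_add_one he).symm
      omega

/-- A transfer lemma: if the endpoints of `e` are linked avoiding `e`, then
removing `e` preserves linkedness. -/
lemma linked_erase {ends : E → Sym2 V} {F : Finset E} {e : E} {u v : V}
    (huv : ends e = s(u, v)) (hlink : linked ends (F.erase e) u v) {x y : V}
    (h : linked ends F x y) : linked ends (F.erase e) x y := by
  induction h with
  | rel a b hab =>
    obtain ⟨f, hf, hfe⟩ := hab
    by_cases hfeq : f = e
    · subst hfeq
      rw [huv] at hfe
      rcases Sym2.eq_iff.mp hfe with ⟨rfl, rfl⟩ | ⟨rfl, rfl⟩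
      · exact hlink
      · exact EqvGen.symm _ _ hlink
    · exact EqvGen.rel _ _ ⟨f, mem_erase.mpr ⟨hfeq, hf⟩, hfe⟩
  | refl a => exact EqvGen.refl _
  | symm a b _ ih => exact EqvGen.symm _ _ ih
  | trans a b c _ _ ih1 ih2 => exact EqvGen.trans _ _ _ ih1 ih2

/-- Existence of a maximal spanning forest of the edge set `Es`: at most `|V|`
edges, preserving all connectivity of `Es`. -/
lemma exists_forest (ends : E → Sym2 V) (Es : Finset E) :
    ∃ F ⊆ Es, F.card ≤ Fintype.card V ∧
      ∀ e ∈ Es, ∀ u v, ends e = s(u, v) → linked ends F u v := by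
  classical
  set P : Finset E → Prop :=
    fun F => F ⊆ Es ∧ ∀ e ∈ Es, ∀ u v, ends e = s(u, v) → linked ends F u v with hP
  have hEs : P Es := ⟨Finset.Subset.rfl, fun e he u v huv => EqvGen.rel _ _ ⟨e, he, huv⟩⟩
  obtain ⟨F, hFmem, hFmin⟩ := Finset.exists_min_image (Es.powerset.filter P) card
    ⟨Es, by rw [mem_filter, mem_powerset]; exact ⟨Finset.Subset.rfl, hEs⟩⟩
  rw [mem_filter, mem_powerset] at hFmem
  obtain ⟨hFsub, hFP⟩ := hFmem
  have hforest : ∀ e ∈ F, ∀ u v, ends e = s(u, v) → ¬ linked ends (F.erase e) u v := by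
    intro e he u v huv hl
    have hPe : P (F.erase e) :=
      ⟨(erase_subset _ _).trans hFP.1,
        fun e' he' u' v' huv' => linked_erase huv hl (hFP.2 e' he' u' v' huv')⟩
    have := hFmin (F.erase e) (by
      rw [mem_filter, mem_powerset]
      exact ⟨hPe.1, hPe⟩)
    have hlt := card_erase_lt_of_mem he
    omega
  refine ⟨F, hFP.1, ?_, hFP.2⟩
  have := forest_card ends F hforest
  omega

lemma aux (ends : E → Sym2 V) : ∀ lam : ℕ, ∀ Es : Finset E,
    ∃ H ⊆ Es, H.card ≤ lam * Fintype.card V ∧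
      ∀ S : Finset V, (crossing ends S ∩ Es).card ≤ lam → crossing ends S ∩ Es ⊆ H := by
  intro lam
  induction lam with
  | zero =>
    intro Es
    refine ⟨∅, empty_subset _, by simp, fun S hS => ?_⟩
    rw [Nat.le_zero, card_eq_zero] at hS
    simp [hS]
  | succ lam ih =>
    intro Es
    obtain ⟨F, hFsub, hFcard, hFlink⟩ := exists_forest ends Es
    obtain ⟨H', hH'sub, hH'card, hH'⟩ := ih (Es \ F)
    refine ⟨F ∪ H', union_subset hFsub (hH'sub.trans (sdiff_subset)), ?_, ?_⟩
    · calc (F ∪ H').card ≤ F.card + H'.card := card_union_le _ _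
        _ ≤ Fintype.card V + lam * Fintype.card V := add_le_add hFcard hH'card
        _ = (lam + 1) * Fintype.card V := by ring
    · intro S hS e he
      rw [mem_inter] at he
      by_cases heF : e ∈ F
      · exact mem_union_left _ heF
      · refine mem_union_right _ (hH' S ?_ (mem_inter.mpr ⟨he.1, mem_sdiff.mpr ⟨he.2, heF⟩⟩))
        obtain ⟨u, v, huv, hu, hv⟩ := crossing_spec he.1
        obtain ⟨f, hf, hfcross⟩ := exists_crossing_of_linked (hFlink e he.2 u v huv) hu hv
        have hsub : crossing ends S ∩ (Es \ F) ⊆ (crossing ends S ∩ Es).erase f := by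
          intro x hx
          rw [mem_inter, mem_sdiff] at hx
          rw [mem_erase, mem_inter]
          exact ⟨fun hxf => hx.2.2 (hxf ▸ hf), hx.1, hx.2.1⟩
        have h1 : (crossing ends S ∩ (Es \ F)).card ≤ ((crossing ends S ∩ Es).erase f).card :=
          card_le_card hsub
        have h2 : ((crossing ends S ∩ Es).erase f).card = (crossing ends S ∩ Es).card - 1 :=
          card_erase_of_mem (mem_inter.mpr ⟨hfcross, hFsub hf⟩)
        have h3 : (crossing ends S ∩ Es).Nonempty := ⟨f, mem_inter.mpr ⟨hfcross, hFsub hf⟩⟩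
        have h4 := card_pos.mpr h3
        omega

end NISparse

/-- Nagamochi–Ibaraki sparsification: every unweighted multigraph on `n`
vertices has a subgraph `H` with at most `λ·n` edges preserving all cuts of
size at most `λ`. -/
theorem stmt_8 {V E : Type*} [Fintype V] [Fintype E] [DecidableEq V] [DecidableEq E]
    (ends : E → Sym2 V) (lam : ℕ) (hlam : 0 < lam) :
    ∃ H : Finset E, H.card ≤ lam * Fintype.card V ∧
      ∀ S : Finset V, (crossing ends S).card ≤ lam →
        (crossing ends S ∩ H).card = (crossing ends S).card := by
  obtain ⟨H, _, hcard, hcut⟩ := NISparse.aux ends lam Finset.univ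
  refine ⟨H, hcard, fun S hS => ?_⟩
  have := hcut S (by simpa using hS)
  rw [Finset.inter_univ] at this
  rw [Finset.inter_eq_left.mpr this]
end

section
/- Let F_1,…,F_λ be edge-disjoint forests in a multigraph G where each F_i is a maximal forest of G minus F_1 ∪ … ∪ F_{i−1}, and let H = F_1 ∪ … ∪ F_λ. Then for every edge (u,v) of G not in H, every cut of G separating u and v has size at least λ+1. -/
/-- Reachability using only edges from `D`. -/
def ReachBy {V E : Type*} [DecidableEq E] (ends : E → Sym2 V) (D : Finset E) :
    V → V → Prop :=
  Relation.ReflTransGen (fun u v => ∃ e ∈ D, ends e = s(u, v))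

/-- `F` is a forest (in the multigraph sense): every edge of `F` is a bridge
of `F`, i.e. its endpoints are not joined by the remaining edges of `F`. -/
def IsForestE {V E : Type*} [DecidableEq E] (ends : E → Sym2 V) (F : Finset E) :
    Prop :=
  ∀ e ∈ F, ∀ u v : V, ends e = s(u, v) → ¬ ReachBy ends (F.erase e) u v

/-- `F` is a maximal forest among subsets of the edge set `G`. -/
def IsMaximalForestIn {V E : Type*} [DecidableEq E] (ends : E → Sym2 V)
    (G F : Finset E) : Prop :=
  F ⊆ G ∧ IsForestE ends F ∧
    ∀ F', F ⊆ F' → F' ⊆ G → IsForestE ends F' → F' = F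

lemma reachBy_symm {V E : Type*} [DecidableEq E] (ends : E → Sym2 V) (D : Finset E)
    {u v : V} (h : ReachBy ends D u v) : ReachBy ends D v u := by
  have hsym : Symmetric (fun u v : V => ∃ e ∈ D, ends e = s(u, v)) := by
    rintro a b ⟨e, he, hends⟩
    exact ⟨e, he, by rw [hends, Sym2.eq_swap]⟩
  exact (@Relation.ReflTransGen.stdSymm _ _ ⟨fun a b h => hsym h⟩).symm _ _ h

lemma reachBy_mono {V E : Type*} [DecidableEq E] (ends : E → Sym2 V) {D D' : Finset E}
    (hDD : D ⊆ D') {u v : V} (h : ReachBy ends D u v) : ReachBy ends D' u v := by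
  refine Relation.ReflTransGen.mono ?_ u v h
  rintro a b ⟨e, he, hends⟩
  exact ⟨e, hDD he, hends⟩

lemma reachBy_insert {V E : Type*} [DecidableEq E] (ends : E → Sym2 V) (D : Finset E)
    {e : E} {u v a b : V} (he : ends e = s(u, v))
    (h : ReachBy ends (insert e D) a b) :
    ReachBy ends D a b ∨ (ReachBy ends D a u ∧ ReachBy ends D v b) ∨
      (ReachBy ends D a v ∧ ReachBy ends D u b) := by
  induction h with
  | refl => left; exact Relation.ReflTransGen.refl
  | @tail c b h step ih =>
    obtain ⟨f, hf, hends⟩ := step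
    rcases Finset.mem_insert.mp hf with rfl | hfD
    · have : s(u, v) = s(c, b) := he.symm.trans hends
      rcases Sym2.eq_iff.mp this with ⟨hu, hv⟩ | ⟨hu, hv⟩
      · subst hu; subst hv
        rcases ih with h1 | ⟨h1, h2⟩ | ⟨h1, h2⟩
        · exact Or.inr (Or.inl ⟨h1, Relation.ReflTransGen.refl⟩)
        · exact Or.inr (Or.inl ⟨h1, Relation.ReflTransGen.refl⟩)
        · exact Or.inl h1
      · subst hu; subst hv
        rcases ih with h1 | ⟨h1, h2⟩ | ⟨h1, h2⟩
        · exact Or.inr (Or.inr ⟨h1, Relation.ReflTransGen.refl⟩)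
        · exact Or.inl h1
        · exact Or.inl (h1.trans (reachBy_symm ends D h2))
    · rcases ih with h1 | ⟨h1, h2⟩ | ⟨h1, h2⟩
      · exact Or.inl (h1.tail ⟨f, hfD, hends⟩)
      · exact Or.inr (Or.inl ⟨h1, h2.tail ⟨f, hfD, hends⟩⟩)
      · exact Or.inr (Or.inr ⟨h1, h2.tail ⟨f, hfD, hends⟩⟩)

lemma exists_crossing {V E : Type*} [Fintype V] [Fintype E] [DecidableEq V] [DecidableEq E]
    (ends : E → Sym2 V) (D : Finset E) (S : Finset V) {u v : V}
    (h : ReachBy ends D u v) (hu : u ∈ S) (hv : v ∉ S) :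
    ∃ f ∈ D, f ∈ crossing ends S := by
  revert hv
  induction h with
  | refl => exact fun hv => absurd hu hv
  | @tail c b h step ih =>
    intro hb
    by_cases hc : c ∈ S
    · obtain ⟨f, hf, hends⟩ := step
      exact ⟨f, hf, Finset.mem_filter.mpr ⟨Finset.mem_univ _, c, b, hends, hc, hb⟩⟩
    · exact ih hc

/-- If `F₁, …, F_λ` are edge-disjoint forests with `Fᵢ` a maximal forest of
`G` minus `F₁ ∪ … ∪ F_{i-1}`, and `H = F₁ ∪ … ∪ F_λ`, then for every edge
`(u,v)` of `G` not in `H`, every cut separating `u` and `v` has at least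
`λ + 1` edges. -/
theorem stmt_9 {V E : Type*} [Fintype V] [Fintype E] [DecidableEq V] [DecidableEq E]
    (ends : E → Sym2 V) (lam : ℕ) (Fo : Fin lam → Finset E)
    (hdisj : ∀ i j, i ≠ j → Disjoint (Fo i) (Fo j))
    (hmax : ∀ i, IsMaximalForestIn ends
      (Finset.univ \ Finset.univ.filter (fun e => ∃ j, j < i ∧ e ∈ Fo j)) (Fo i)) :
    ∀ e : E, (∀ i, e ∉ Fo i) → ∀ u v : V, ends e = s(u, v) →
      ∀ S : Finset V, u ∈ S → v ∉ S → lam + 1 ≤ (crossing ends S).card := by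
  intro e he u v hends S hu hv
  have key : ∀ i, ReachBy ends (Fo i) u v := by
    intro i
    by_contra hnr
    obtain ⟨hsub, hforest, hmaxi⟩ := hmax i
    have hne : e ∉ Fo i := he i
    have heG : e ∈ Finset.univ \ Finset.univ.filter
        (fun e => ∃ j, j < i ∧ e ∈ Fo j) := by
      simp only [Finset.mem_sdiff, Finset.mem_univ, Finset.mem_filter, true_and]
      push_neg
      intro j _
      exact he j
    have hforest' : IsForestE ends (insert e (Fo i)) := by
      intro f hf a b hab hreach
      rcases Finset.mem_insert.mp hf with rfl | hfF
      · rw [Finset.erase_insert hne] at hreach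
        have : s(u, v) = s(a, b) := hends.symm.trans hab
        rcases Sym2.eq_iff.mp this with ⟨hu', hv'⟩ | ⟨hu', hv'⟩
        · subst hu'; subst hv'; exact hnr hreach
        · subst hu'; subst hv'; exact hnr (reachBy_symm ends _ hreach)
      · have hfe : f ≠ e := fun h => hne (h ▸ hfF)
        rw [Finset.erase_insert_of_ne hfe.symm] at hreach
        have hnf : ¬ ReachBy ends ((Fo i).erase f) a b := hforest f hfF a b hab
        have hsubF : (Fo i).erase f ⊆ Fo i := Finset.erase_subset _ _
        rcases reachBy_insert ends _ hends hreach with h1 | ⟨h1, h2⟩ | ⟨h1, h2⟩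
        · exact hnf h1
        · apply hnr
          have hua : ReachBy ends (Fo i) u a :=
            reachBy_symm ends _ (reachBy_mono ends hsubF h1)
          have hbv : ReachBy ends (Fo i) b v :=
            reachBy_symm ends _ (reachBy_mono ends hsubF h2)
          exact (hua.tail ⟨f, hfF, hab⟩).trans hbv
        · apply hnr
          have hub : ReachBy ends (Fo i) u b := reachBy_mono ends hsubF h2
          have hav : ReachBy ends (Fo i) a v := reachBy_mono ends hsubF h1
          have hba : ends f = s(b, a) := by rw [hab, Sym2.eq_swap]
          exact (hub.tail ⟨f, hfF, hba⟩).trans hav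
    have heq := hmaxi (insert e (Fo i)) (Finset.subset_insert _ _)
      (Finset.insert_subset heG hsub) hforest'
    exact hne (heq ▸ Finset.mem_insert_self e (Fo i))
  have hchoice : ∀ i : Fin lam, ∃ f, f ∈ Fo i ∧ f ∈ crossing ends S := by
    intro i
    obtain ⟨f, hf1, hf2⟩ := exists_crossing ends (Fo i) S (key i) hu hv
    exact ⟨f, hf1, hf2⟩
  choose f hf1 hf2 using hchoice
  have hecross : e ∈ crossing ends S :=
    Finset.mem_filter.mpr ⟨Finset.mem_univ _, u, v, hends, hu, hv⟩
  have hinj : Function.Injective f := by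
    intro i j hij
    by_contra hne
    exact Finset.disjoint_left.mp (hdisj i j hne) (hf1 i) (hij ▸ hf1 j)
  have hfe : ∀ i, f i ≠ e := fun i h => he i (h ▸ hf1 i)
  have hsubs : Finset.univ.image f ⊆ (crossing ends S).erase e := by
    intro x hx
    obtain ⟨i, _, rfl⟩ := Finset.mem_image.mp hx
    exact Finset.mem_erase.mpr ⟨hfe i, hf2 i⟩
  have h1 : lam ≤ ((crossing ends S).erase e).card := by
    calc lam = (Finset.univ.image f).card := by
          rw [Finset.card_image_of_injective _ hinj, Finset.card_univ, Fintype.card_fin]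
      _ ≤ _ := Finset.card_le_card hsubs
  have h2 := Finset.card_erase_of_mem hecross
  have h3 : 0 < (crossing ends S).card := Finset.card_pos.mpr ⟨e, hecross⟩
  omega
end

section
/- Let f : [0,∞) → ℝ be differentiable with f(0) = n and f'(t) ≤ −(γ/2)·f(t) + B·e^{−t}·n for all t ≥ 0, where 1 ≤ γ < 2 and B ≥ 0. Then for all t ≥ 0, f(t) ≤ (1/(1−A))·n·e^{−(γ/2)t} where A = B/(B + 1 − γ/2). In particular f(t) ≤ ((γ−1)/(2−γ)·β + 1)·n·e^{−(γ/2)t} when B = (γ−1)β/2. -/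
/-- Grönwall-type comparison: if `f(0) = n` and
`f'(t) ≤ -(γ/2)·f(t) + B·e^{-t}·n` on `[0,∞)`, then
`f(t) ≤ (1/(1-A))·n·e^{-(γ/2)t}` where `A = B/(B+1-γ/2)`; in particular, when
`B = (γ-1)β/2` one gets `f(t) ≤ ((γ-1)/(2-γ)·β + 1)·n·e^{-(γ/2)t}`. -/
theorem stmt_11 (γ B n : ℝ) (hγ1 : 1 ≤ γ) (hγ2 : γ < 2) (hB : 0 ≤ B) (hn : 0 < n)
    (f f' : ℝ → ℝ) (hf0 : f 0 = n)
    (hderiv : ∀ t : ℝ, 0 ≤ t → HasDerivAt f (f' t) t)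
    (hineq : ∀ t : ℝ, 0 ≤ t → f' t ≤ -(γ / 2) * f t + B * Real.exp (-t) * n) :
    (∀ t : ℝ, 0 ≤ t →
      f t ≤ (1 / (1 - B / (B + 1 - γ / 2))) * n * Real.exp (-(γ / 2) * t)) ∧
    (∀ β : ℝ, 0 ≤ β → B = (γ - 1) * β / 2 →
      ∀ t : ℝ, 0 ≤ t →
        f t ≤ ((γ - 1) / (2 - γ) * β + 1) * n * Real.exp (-(γ / 2) * t)) := by
  set c : ℝ := 1 - γ / 2 with hc_def
  have hc : 0 < c := by simp only [hc_def]; linarith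
  set φ : ℝ → ℝ := fun t => f t * Real.exp (γ / 2 * t) + B * n / c * Real.exp (-(c * t))
    with hφ_def
  have hφderiv : ∀ t : ℝ, 0 ≤ t → HasDerivAt φ
      ((f' t + γ / 2 * f t) * Real.exp (γ / 2 * t) - B * n * Real.exp (-(c * t))) t := by
    intro t ht
    have h1 : HasDerivAt (fun t => Real.exp (γ / 2 * t)) (γ / 2 * Real.exp (γ / 2 * t)) t := by
      simpa [mul_comm] using ((hasDerivAt_id t).const_mul (γ / 2)).exp
    have h2 : HasDerivAt (fun t => B * n / c * Real.exp (-(c * t)))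
        (B * n / c * (Real.exp (-(c * t)) * (-c))) t := by
      have hin : HasDerivAt (fun t : ℝ => -(c * t)) (-c) t := by
        simpa using ((hasDerivAt_id t).const_mul c).fun_neg
      exact hin.exp.const_mul _
    have := ((hderiv t ht).mul h1).add h2
    convert this using 1
    · rfl
    · rfl
    · rfl
    field_simp
    ring
  have hanti : AntitoneOn φ (Set.Ici 0) := by
    have hcont : ContinuousOn φ (Set.Ici 0) := fun t ht =>
      ((hφderiv t ht).continuousAt).continuousWithinAt
    have hdiff : ∀ t ∈ interior (Set.Ici (0:ℝ)), HasDerivAt φ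
        ((f' t + γ / 2 * f t) * Real.exp (γ / 2 * t) - B * n * Real.exp (-(c * t))) t := by
      intro t ht
      rw [interior_Ici] at ht
      exact hφderiv t (le_of_lt ht)
    refine AntitoneOn.congr ?_ (fun x _ => rfl)
    apply antitoneOn_of_hasDerivWithinAt_nonpos (convex_Ici 0) hcont
      (fun t ht => (hdiff t ht).hasDerivWithinAt)
    intro t ht
    rw [interior_Ici] at ht
    have ht' : (0:ℝ) ≤ t := le_of_lt ht
    have key : f' t + γ / 2 * f t ≤ B * Real.exp (-t) * n := by
      have := hineq t ht'; linarith
    have hexp : Real.exp (-t) * Real.exp (γ / 2 * t) = Real.exp (-(c * t)) := by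
      rw [← Real.exp_add]; congr 1; simp only [hc_def]; ring
    have : (f' t + γ / 2 * f t) * Real.exp (γ / 2 * t)
        ≤ B * Real.exp (-t) * n * Real.exp (γ / 2 * t) :=
      mul_le_mul_of_nonneg_right key (Real.exp_nonneg _)
    have heq : B * Real.exp (-t) * n * Real.exp (γ / 2 * t) = B * n * Real.exp (-(c * t)) := by
      rw [← hexp]; ring
    linarith [this, heq ▸ this]
  have main : ∀ t : ℝ, 0 ≤ t → f t ≤ (B + c) / c * n * Real.exp (-(γ / 2) * t) := by
    intro t ht
    have hφt : φ t ≤ φ 0 := hanti (Set.self_mem_Ici) ht ht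
    have hφ0 : φ 0 = n + B * n / c := by simp [hφ_def, hf0]
    have hφt' : f t * Real.exp (γ / 2 * t) ≤ n + B * n / c := by
      have hpos : 0 ≤ B * n / c * Real.exp (-(c * t)) :=
        mul_nonneg (by positivity) (Real.exp_nonneg _)
      simp only [hφ_def, mul_zero, neg_zero, Real.exp_zero, mul_one, hf0] at hφt
      linarith
    have hval : n + B * n / c = (B + c) / c * n := by field_simp; ring
    have hexp_pos : 0 < Real.exp (γ / 2 * t) := Real.exp_pos _
    have := mul_le_mul_of_nonneg_right hφt' (Real.exp_nonneg (-(γ / 2) * t))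
    rw [mul_assoc, ← Real.exp_add] at this
    simp only [show γ / 2 * t + -(γ / 2) * t = 0 by ring, Real.exp_zero, mul_one] at this
    rw [hval] at this
    exact this
  have hA : 1 / (1 - B / (B + 1 - γ / 2)) = (B + c) / c := by
    have hBc : B + c ≠ 0 := by positivity
    have hc' : c ≠ 0 := ne_of_gt hc
    have h1 : B + 1 - γ / 2 = B + c := by simp only [hc_def]; ring
    rw [h1]
    field_simp
    rw [add_sub_cancel_left, div_self hc']
  constructor
  · intro t ht
    rw [hA]
    exact main t ht
  · intro β hβ hBβ t ht
    have h2γ : (0:ℝ) < 2 - γ := by linarith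
    have hcoef : (γ - 1) / (2 - γ) * β + 1 = (B + c) / c := by
      rw [hBβ]; simp only [hc_def]
      have : (2:ℝ) - γ ≠ 0 := ne_of_gt h2γ
      field_simp
    rw [hcoef]
    exact main t ht
end

section
/- Let X_1,…,X_m be independent Bernoulli(p) random variables and let f(X_1,…,X_m) be a function that changes by at most 1 when a single coordinate is changed. Let Y_i = E[f | X_1,…,X_i] be the Doob martingale, and Z_i = Y_i − Y_{i−1}. Then for every i, E[Z_i² | X_1,…,X_{i−1}] ≤ p(1−p). -/
open MeasureTheory Finset

/-- The Bernoulli measure on `Bool` with success probability `p`. -/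
noncomputable def bern (p : ℝ) (h0 : 0 ≤ p) (h1 : p ≤ 1) : Measure Bool :=
  (PMF.bernoulli (Real.toNNReal p) (Real.toNNReal_le_one.mpr h1)).toMeasure

/-- The σ-algebra generated by the first `i` coordinates of `Fin m → Bool`. -/
def coordSA (m i : ℕ) : MeasurableSpace (Fin m → Bool) :=
  MeasurableSpace.comap (fun ω (j : {j : Fin m // (j : ℕ) < i}) => ω j) ⊤

namespace Stmt12Aux

variable {m : ℕ}

/-- Merge: coordinates `< j` from `ω`, the rest from `σ`. -/
def M (j : ℕ) (ω σ : Fin m → Bool) : Fin m → Bool := fun l => if (l : ℕ) < j then ω l else σ l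

/-- Weight of a single bit. -/
def w1 (p : ℝ) (b : Bool) : ℝ := if b then p else 1 - p

/-- Weight of a configuration. -/
def W (p : ℝ) (σ : Fin m → Bool) : ℝ := ∏ j, w1 p (σ j)

/-- Explicit conditional expectation operator given the first `j` coordinates. -/
noncomputable def Gop (p : ℝ) (j : ℕ) (h : (Fin m → Bool) → ℝ) (ω : Fin m → Bool) : ℝ :=
  ∑ σ : Fin m → Bool, W p σ * h (M j ω σ)

instance (p : ℝ) (h0 : 0 ≤ p) (h1 : p ≤ 1) : IsProbabilityMeasure (bern p h0 h1) :=
  PMF.toMeasure.isProbabilityMeasure _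

lemma w1_nonneg {p : ℝ} (h0 : 0 ≤ p) (h1 : p ≤ 1) (b : Bool) : 0 ≤ w1 p b := by
  cases b <;> simp [w1] <;> linarith

lemma W_nonneg {p : ℝ} (h0 : 0 ≤ p) (h1 : p ≤ 1) (σ : Fin m → Bool) : 0 ≤ W p σ :=
  Finset.prod_nonneg fun j _ => w1_nonneg h0 h1 _

lemma w1_sum (p : ℝ) : ∑ b : Bool, w1 p b = 1 := by simp [w1]

lemma W_sum (p : ℝ) : ∑ σ : Fin m → Bool, W p σ = 1 := by
  have := (Finset.prod_univ_sum (fun _ : Fin m => (univ : Finset Bool))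
    (fun _ b => w1 p b)).symm
  rw [Fintype.piFinset_univ] at this
  simp only [W]
  rw [this]
  have h : ∑ b : Bool, w1 p b = 1 := w1_sum p
  rw [Finset.prod_congr rfl fun (_ : Fin m) _ => h]
  simp

lemma bern_singleton_toReal {p : ℝ} (h0 : 0 ≤ p) (h1 : p ≤ 1) (b : Bool) :
    (bern p h0 h1 {b}).toReal = w1 p b := by
  rw [bern, PMF.toMeasure_apply_singleton _ _ (measurableSet_singleton _)]
  rw [PMF.bernoulli_apply]
  cases b
  · show (((1 - p.toNNReal : NNReal) : ENNReal)).toReal = 1 - p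
    rw [ENNReal.coe_toReal, NNReal.coe_sub (Real.toNNReal_le_one.mpr h1), NNReal.coe_one,
      Real.coe_toNNReal _ h0]
  · show (((p.toNNReal : NNReal) : ENNReal)).toReal = p
    rw [ENNReal.coe_toReal, Real.coe_toNNReal _ h0]

lemma measure_singleton_toReal {p : ℝ} (h0 : 0 ≤ p) (h1 : p ≤ 1) (ω : Fin m → Bool) :
    ((Measure.pi fun _ : Fin m => bern p h0 h1) {ω}).toReal = W p ω := by
  rw [← Set.univ_pi_singleton ω, Measure.pi_pi, ENNReal.toReal_prod]
  exact Finset.prod_congr rfl fun j _ => bern_singleton_toReal h0 h1 (ω j)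

lemma M_mem_iff {j : ℕ} {s : Set (Fin m → Bool)} (hs : MeasurableSet[coordSA m j] s)
    (ω σ : Fin m → Bool) : M j ω σ ∈ s ↔ ω ∈ s := by
  obtain ⟨B, -, rfl⟩ := hs
  have : (fun (l : {l : Fin m // (l : ℕ) < j}) => M j ω σ l)
      = fun (l : {l : Fin m // (l : ℕ) < j}) => ω l := by
    funext l; simp [M, l.2]
  simp only [Set.mem_preimage, this]

lemma M_M (j : ℕ) (ω σ : Fin m → Bool) : M j (M j ω σ) (M j σ ω) = ω := by
  funext l; by_cases hl : (l : ℕ) < j <;> simp [M, hl]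

lemma W_M_mul (p : ℝ) (j : ℕ) (ω σ : Fin m → Bool) :
    W p (M j ω σ) * W p (M j σ ω) = W p ω * W p σ := by
  rw [W, W, W, W, ← Finset.prod_mul_distrib, ← Finset.prod_mul_distrib]
  exact Finset.prod_congr rfl fun l _ => by by_cases hl : (l : ℕ) < j <;>
    simp [M, hl, mul_comm]

lemma update_symm (k : Fin m) (b c : Bool) (y : {j : Fin m // j ≠ k} → Bool) :
    Function.update ((Equiv.funSplitAt k Bool).symm (b, y)) k c
      = (Equiv.funSplitAt k Bool).symm (c, y) := by
  funext l
  by_cases hl : l = k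
  · subst hl; simp [Function.update_self]
  · simp [Function.update_of_ne hl, Equiv.funSplitAt, Equiv.piSplitAt, hl]

lemma W_symm (p : ℝ) (k : Fin m) (b : Bool) (y : {j : Fin m // j ≠ k} → Bool) :
    W p ((Equiv.funSplitAt k Bool).symm (b, y))
      = w1 p b * ∏ j : {j : Fin m // j ≠ k}, w1 p (y j) := by
  set σ := (Equiv.funSplitAt k Bool).symm (b, y) with hσ
  have hk : σ k = b := by simp [hσ, Equiv.funSplitAt, Equiv.piSplitAt]
  have hj : ∀ (j : Fin m) (h : j ≠ k), σ j = y ⟨j, h⟩ := by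
    intro j hj; simp [hσ, Equiv.funSplitAt, Equiv.piSplitAt, hj]
  rw [W, ← Finset.mul_prod_erase univ _ (mem_univ k), hk]
  congr 1
  rw [Finset.prod_subtype (p := fun j => j ≠ k) (univ.erase k) (fun j => by simp)
    (fun j => w1 p (σ j))]
  exact Finset.prod_congr rfl fun j _ => by rw [hj j j.2]

lemma Lsplit (p : ℝ) (k : Fin m) (F : (Fin m → Bool) → ℝ) :
    ∑ σ : Fin m → Bool, W p σ * F σ
      = p * ∑ σ : Fin m → Bool, W p σ * F (Function.update σ k true)
        + (1 - p) * ∑ σ : Fin m → Bool, W p σ * F (Function.update σ k false) := by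
  set e := Equiv.funSplitAt k Bool
  have key : ∀ G : (Fin m → Bool) → ℝ, ∑ σ : Fin m → Bool, W p σ * G σ
      = ∑ y : {j : Fin m // j ≠ k} → Bool, ∑ b : Bool,
          (w1 p b * ∏ j, w1 p (y j)) * G (e.symm (b, y)) := by
    intro G
    rw [← Equiv.sum_comp e.symm (fun σ => W p σ * G σ), Fintype.sum_prod_type,
      Finset.sum_comm]
    exact Finset.sum_congr rfl fun y _ => Finset.sum_congr rfl fun b _ => by
      rw [W_symm]
  have keyupd : ∀ c : Bool, ∑ σ : Fin m → Bool, W p σ * F (Function.update σ k c)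
      = ∑ y : {j : Fin m // j ≠ k} → Bool, (∏ j, w1 p (y j)) * F (e.symm (c, y)) := by
    intro c
    rw [key (fun σ => F (Function.update σ k c))]
    refine Finset.sum_congr rfl fun y _ => ?_
    rw [Fintype.sum_bool]
    rw [update_symm, update_symm]
    rw [show w1 p true = p from rfl, show w1 p false = 1 - p from rfl]
    ring
  rw [key F, keyupd true, keyupd false, Finset.mul_sum, Finset.mul_sum,
    ← Finset.sum_add_distrib]
  refine Finset.sum_congr rfl fun y _ => ?_
  rw [Fintype.sum_bool]
  rw [show w1 p true = p from rfl, show w1 p false = 1 - p from rfl]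
  ring

lemma coordSA_le (j : ℕ) : coordSA m j ≤ (inferInstance : MeasurableSpace (Fin m → Bool)) :=
  fun _ _ => MeasurableSet.of_discrete

lemma Gop_stronglyMeasurable (p : ℝ) (j : ℕ) (h : (Fin m → Bool) → ℝ) :
    StronglyMeasurable[coordSA m j] (Gop p j h) := by
  set proj := fun (ω : Fin m → Bool) (l : {l : Fin m // (l : ℕ) < j}) => ω l with hproj
  set H := fun (x : {l : Fin m // (l : ℕ) < j} → Bool) =>
    ∑ σ : Fin m → Bool, W p σ * h (fun l => if hl : (l : ℕ) < j then x ⟨l, hl⟩ else σ l) with hH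
  have heq : Gop p j h = H ∘ proj := by
    funext ω
    show (∑ σ : Fin m → Bool, W p σ * h (M j ω σ)) = H (proj ω)
    simp only [hH]
    refine Finset.sum_congr rfl fun σ _ => ?_
    have harg : M j ω σ = fun (l : Fin m) => if hl : (l : ℕ) < j then proj ω ⟨l, hl⟩ else σ l := by
      funext l; by_cases hl : (l : ℕ) < j <;> simp [M, hl, hproj]
    rw [harg]
  rw [heq]
  have hp : Measurable[coordSA m j] proj := fun t _ => ⟨t, trivial, rfl⟩
  exact (Measurable.of_discrete.comp hp).stronglyMeasurable

lemma setIntegral_Gop {p : ℝ} (h0 : 0 ≤ p) (h1 : p ≤ 1) (j : ℕ)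
    (h : (Fin m → Bool) → ℝ) {s : Set (Fin m → Bool)}
    (hs : MeasurableSet[coordSA m j] s) :
    ∫ x in s, Gop p j h x ∂(Measure.pi fun _ : Fin m => bern p h0 h1)
      = ∫ x in s, h x ∂(Measure.pi fun _ : Fin m => bern p h0 h1) := by
  classical
  set μ : Measure (Fin m → Bool) := Measure.pi fun _ : Fin m => bern p h0 h1 with hμ
  have hsm : MeasurableSet s := coordSA_le j s hs
  have conv : ∀ F : (Fin m → Bool) → ℝ,
      ∫ x in s, F x ∂μ = ∑ ω : Fin m → Bool, W p ω * (if ω ∈ s then F ω else 0) := by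
    intro F
    rw [← integral_indicator hsm, integral_fintype .of_finite]
    refine Finset.sum_congr rfl fun ω _ => ?_
    rw [Measure.real, measure_singleton_toReal h0 h1, smul_eq_mul, Set.indicator_apply]
  rw [conv, conv]
  have expand : ∑ ω : Fin m → Bool, W p ω * (if ω ∈ s then Gop p j h ω else 0)
      = ∑ q : (Fin m → Bool) × (Fin m → Bool),
          (if q.1 ∈ s then W p q.1 * W p q.2 * h (M j q.1 q.2) else 0) := by
    rw [Fintype.sum_prod_type]
    refine Finset.sum_congr rfl fun ω _ => ?_
    by_cases hω : ω ∈ s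
    · simp only [hω, if_true, Gop, Finset.mul_sum]
      exact Finset.sum_congr rfl fun σ _ => by ring
    · simp [hω]
  rw [expand]
  have hT : Function.Involutive
      (fun q : (Fin m → Bool) × (Fin m → Bool) => (M j q.1 q.2, M j q.2 q.1)) := by
    intro q; simp [M_M]
  rw [Fintype.sum_bijective _ hT.bijective
    (fun q : (Fin m → Bool) × (Fin m → Bool) =>
      if q.1 ∈ s then W p q.1 * W p q.2 * h (M j q.1 q.2) else 0)
    (fun q : (Fin m → Bool) × (Fin m → Bool) =>
      if q.1 ∈ s then W p q.1 * W p q.2 * h q.1 else 0)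
    (fun q => by
      show (if q.1 ∈ s then W p q.1 * W p q.2 * h (M j q.1 q.2) else 0)
          = if (M j q.1 q.2) ∈ s then
              W p (M j q.1 q.2) * W p (M j q.2 q.1) * h (M j q.1 q.2) else 0
      rw [M_mem_iff hs, W_M_mul])]
  rw [Fintype.sum_prod_type]
  refine Finset.sum_congr rfl fun ω _ => ?_
  by_cases hω : ω ∈ s
  · simp only [hω, if_true]
    rw [← Finset.sum_mul]
    rw [show ∑ σ : Fin m → Bool, W p ω * W p σ = W p ω * ∑ σ : Fin m → Bool, W p σ from
      Finset.mul_sum _ _ _ |>.symm, W_sum, mul_one]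
  · simp [hω]

lemma Gop_ae_eq_condexp {p : ℝ} (h0 : 0 ≤ p) (h1 : p ≤ 1) (j : ℕ)
    (h : (Fin m → Bool) → ℝ) :
    Gop p j h =ᵐ[Measure.pi fun _ : Fin m => bern p h0 h1]
      (Measure.pi fun _ : Fin m => bern p h0 h1)[h|coordSA m j] := by
  set μ : Measure (Fin m → Bool) := Measure.pi fun _ : Fin m => bern p h0 h1 with hμ
  have hm := coordSA_le (m := m) j
  exact ae_eq_condExp_of_forall_setIntegral_eq hm (.of_finite)
    (fun s _ _ => Integrable.integrableOn .of_finite)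
    (fun s hs _ => setIntegral_Gop h0 h1 j h hs)
    ⟨Gop p j h, Gop_stronglyMeasurable p j h, Filter.EventuallyEq.rfl⟩

lemma M_agree (j : ℕ) {ω ω' : Fin m → Bool} (σ : Fin m → Bool)
    (hag : ∀ l : Fin m, (l : ℕ) < j → ω l = ω' l) : M j ω σ = M j ω' σ := by
  funext l
  by_cases hl : (l : ℕ) < j
  · simp [M, hl, hag l hl]
  · simp [M, hl]

lemma Gop_eq_of_agree (p : ℝ) (j : ℕ) (h : (Fin m → Bool) → ℝ) {ω ω' : Fin m → Bool}
    (hag : ∀ l : Fin m, (l : ℕ) < j → ω l = ω' l) : Gop p j h ω = Gop p j h ω' :=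
  Finset.sum_congr rfl fun σ _ => by rw [M_agree j σ hag]

lemma M_update (k : Fin m) (b : Bool) (τ σ : Fin m → Bool) :
    M (k : ℕ) τ (Function.update σ k b) = M ((k : ℕ) + 1) (Function.update τ k b) σ := by
  funext l
  by_cases hl : l = k
  · subst hl
    simp [M, lt_self_iff_false, Nat.lt_succ_self, Function.update_self]
  · have hlk : (l : ℕ) ≠ (k : ℕ) := fun hh => hl (Fin.ext hh)
    by_cases h2 : (l : ℕ) < (k : ℕ)
    · simp [M, h2, Function.update_of_ne hl, show (l : ℕ) < (k : ℕ) + 1 by omega]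
    · simp [M, h2, Function.update_of_ne hl, show ¬((l : ℕ) < (k : ℕ) + 1) by omega]

lemma Gop_rec (p : ℝ) (f : (Fin m → Bool) → ℝ) (k : Fin m) (τ : Fin m → Bool) :
    Gop p (k : ℕ) f τ
      = p * Gop p ((k : ℕ) + 1) f (Function.update τ k true)
        + (1 - p) * Gop p ((k : ℕ) + 1) f (Function.update τ k false) := by
  have hls := Lsplit p k (fun σ => f (M (k : ℕ) τ σ))
  rw [Gop, hls]
  congr 1
  · congr 1
    exact Finset.sum_congr rfl fun σ _ => by rw [M_update]
  · congr 1
    exact Finset.sum_congr rfl fun σ _ => by rw [M_update]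

lemma Gop_update_diff_le {p : ℝ} (h0 : 0 ≤ p) (h1 : p ≤ 1) (f : (Fin m → Bool) → ℝ)
    (hlip : ∀ (ω : Fin m → Bool) (j : Fin m) (b : Bool),
      |f (Function.update ω j b) - f ω| ≤ 1)
    (j : ℕ) (k : Fin m) (hkj : (k : ℕ) < j) (ω : Fin m → Bool) :
    |Gop p j f (Function.update ω k true) - Gop p j f (Function.update ω k false)| ≤ 1 := by
  rw [Gop, Gop, ← Finset.sum_sub_distrib]
  have hterm : ∀ σ : Fin m → Bool,
      M j (Function.update ω k true) σ
        = Function.update (M j (Function.update ω k false) σ) k true := by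
    intro σ
    funext l
    by_cases hl : l = k
    · subst hl; simp [M, hkj, Function.update_self]
    · rw [Function.update_of_ne hl]
      by_cases h2 : (l : ℕ) < j <;> simp [M, h2, Function.update_of_ne hl]
  calc |∑ σ : Fin m → Bool,
          (W p σ * f (M j (Function.update ω k true) σ)
            - W p σ * f (M j (Function.update ω k false) σ))|
      ≤ ∑ σ : Fin m → Bool,
          |W p σ * f (M j (Function.update ω k true) σ)
            - W p σ * f (M j (Function.update ω k false) σ)| :=
        Finset.abs_sum_le_sum_abs _ _
    _ ≤ ∑ σ : Fin m → Bool, W p σ := by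
        refine Finset.sum_le_sum fun σ _ => ?_
        rw [← mul_sub, abs_mul, abs_of_nonneg (W_nonneg h0 h1 σ)]
        have hb := hlip (M j (Function.update ω k false) σ) k true
        rw [← hterm σ] at hb
        calc W p σ * |f (M j (Function.update ω k true) σ)
              - f (M j (Function.update ω k false) σ)|
            ≤ W p σ * 1 := by
              exact mul_le_mul_of_nonneg_left hb (W_nonneg h0 h1 σ)
          _ = W p σ := mul_one _
    _ = 1 := W_sum p

lemma pointwise_bound {p : ℝ} (h0 : 0 ≤ p) (h1 : p ≤ 1)
    (f : (Fin m → Bool) → ℝ)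
    (hlip : ∀ (ω : Fin m → Bool) (j : Fin m) (b : Bool),
      |f (Function.update ω j b) - f ω| ≤ 1)
    {i : ℕ} (hi : 1 ≤ i) (him : i ≤ m) (ω : Fin m → Bool) :
    Gop p (i - 1) (fun τ => (Gop p i f τ - Gop p (i - 1) f τ) ^ 2) ω ≤ p * (1 - p) := by
  classical
  have hkm : i - 1 < m := by omega
  set k : Fin m := ⟨i - 1, hkm⟩ with hkdef
  have hkv : (k : ℕ) = i - 1 := rfl
  have hk1 : (k : ℕ) + 1 = i := by omega
  set A : ℝ := Gop p i f (Function.update ω k true) with hA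
  set B : ℝ := Gop p i f (Function.update ω k false) with hB
  set d : ℝ := A - B with hd
  -- each configuration τσ = M (i-1) ω σ agrees with ω below i-1
  have hagree : ∀ σ : Fin m → Bool, ∀ l : Fin m, (l : ℕ) < i - 1 → M (i - 1) ω σ l = ω l := by
    intro σ l hl; simp [M, hl]
  have c1 : ∀ (σ : Fin m → Bool) (b : Bool),
      Gop p i f (Function.update (M (i - 1) ω σ) k b) = Gop p i f (Function.update ω k b) := by
    intro σ b
    refine Gop_eq_of_agree p i f fun l hl => ?_
    by_cases hlk : l = k
    · subst hlk; simp [Function.update_self]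
    · have hlk' : (l : ℕ) ≠ i - 1 := fun hh => hlk (Fin.ext (by rw [hh, hkv]))
      rw [Function.update_of_ne hlk, Function.update_of_ne hlk]
      exact hagree σ l (by omega)
  have c2 : ∀ σ : Fin m → Bool,
      Gop p i f (M (i - 1) ω σ) = if σ k then A else B := by
    intro σ
    have hτ : M (i - 1) ω σ = Function.update (M (i - 1) ω σ) k (σ k) := by
      have hkk : M (i - 1) ω σ k = σ k := by simp [M, hkv]
      rw [← hkk, Function.update_eq_self]
    rw [hτ, c1 σ (σ k)]
    cases hσk : σ k <;> simp [hσk, hA, hB]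
  have c3 : ∀ σ : Fin m → Bool,
      Gop p (i - 1) f (M (i - 1) ω σ) = p * A + (1 - p) * B := by
    intro σ
    have := Gop_rec p f k (M (i - 1) ω σ)
    rw [hk1, hkv] at this
    rw [this, c1 σ true, c1 σ false]
  have hZval : ∀ σ : Fin m → Bool,
      (Gop p i f (M (i - 1) ω σ) - Gop p (i - 1) f (M (i - 1) ω σ)) ^ 2
        = if σ k then ((1 - p) * d) ^ 2 else (p * d) ^ 2 := by
    intro σ
    rw [c2 σ, c3 σ]
    cases hσk : σ k <;> simp [hσk, hd] <;> ring
  have hmain : Gop p (i - 1) (fun τ => (Gop p i f τ - Gop p (i - 1) f τ) ^ 2) ω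
      = p * (1 - p) * d ^ 2 := by
    rw [Gop]
    rw [Finset.sum_congr rfl fun σ _ => by rw [hZval σ]]
    have hls := Lsplit p k
      (fun σ : Fin m → Bool => if σ k then ((1 - p) * d) ^ 2 else (p * d) ^ 2)
    simp only [Function.update_self, if_true, Bool.false_eq_true, if_false] at hls
    rw [hls]
    have e1 : ∀ c : ℝ, ∑ σ : Fin m → Bool, W p σ * c = c := by
      intro c; rw [← Finset.sum_mul, W_sum, one_mul]
    rw [e1, e1]
    ring
  rw [hmain]
  have hdle : |d| ≤ 1 := Gop_update_diff_le h0 h1 f hlip i k (by omega) ω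
  have hd2 : d ^ 2 ≤ 1 := (sq_le_one_iff_abs_le_one d).mpr hdle
  have hpp : 0 ≤ p * (1 - p) := mul_nonneg h0 (by linarith)
  calc p * (1 - p) * d ^ 2 ≤ p * (1 - p) * 1 := mul_le_mul_of_nonneg_left hd2 hpp
    _ = p * (1 - p) := mul_one _

end Stmt12Aux

/-- For independent Bernoulli(p) bits and a `1`-Lipschitz (in Hamming metric)
function `f`, the Doob-martingale differences `Zᵢ = Yᵢ - Y_{i-1}` of
`Yᵢ = E[f | X₁,…,Xᵢ]` satisfy `E[Zᵢ² | X₁,…,X_{i-1}] ≤ p(1-p)`. -/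
theorem stmt_12 (m : ℕ) (p : ℝ) (h0 : 0 ≤ p) (h1 : p ≤ 1)
    (f : (Fin m → Bool) → ℝ)
    (hlip : ∀ (ω : Fin m → Bool) (j : Fin m) (b : Bool),
      |f (Function.update ω j b) - f ω| ≤ 1)
    (i : ℕ) (hi : 1 ≤ i) (him : i ≤ m) :
    let μ : Measure (Fin m → Bool) := Measure.pi fun _ => bern p h0 h1
    let Y : ℕ → (Fin m → Bool) → ℝ := fun j => μ[f|coordSA m j]
    let Z : (Fin m → Bool) → ℝ := fun ω => Y i ω - Y (i - 1) ω
    ∀ᵐ ω ∂μ, (μ[fun ω' => (Z ω') ^ 2|coordSA m (i - 1)]) ω ≤ p * (1 - p) := by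
  intro μ Y Z
  set Z' : (Fin m → Bool) → ℝ :=
    fun τ => Stmt12Aux.Gop p i f τ - Stmt12Aux.Gop p (i - 1) f τ with hZ'
  have hvi : Stmt12Aux.Gop p i f =ᵐ[μ] μ[f|coordSA m i] :=
    Stmt12Aux.Gop_ae_eq_condexp h0 h1 i f
  have hvi' : Stmt12Aux.Gop p (i - 1) f =ᵐ[μ] μ[f|coordSA m (i - 1)] :=
    Stmt12Aux.Gop_ae_eq_condexp h0 h1 (i - 1) f
  have hZae : Z =ᵐ[μ] Z' := by
    filter_upwards [hvi, hvi'] with ω e1 e2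
    show Y i ω - Y (i - 1) ω = _
    show (μ[f|coordSA m i]) ω - (μ[f|coordSA m (i - 1)]) ω = _
    rw [← e1, ← e2]
  have hsq : (fun ω' => Z ω' ^ 2) =ᵐ[μ] (fun ω' => Z' ω' ^ 2) := by
    filter_upwards [hZae] with ω e
    simp only [e]
  have hc : μ[fun ω' => Z ω' ^ 2|coordSA m (i - 1)]
      =ᵐ[μ] μ[fun ω' => Z' ω' ^ 2|coordSA m (i - 1)] := condExp_congr_ae hsq
  have hv2 : Stmt12Aux.Gop p (i - 1) (fun τ => Z' τ ^ 2)
      =ᵐ[μ] μ[fun ω' => Z' ω' ^ 2|coordSA m (i - 1)] :=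
    Stmt12Aux.Gop_ae_eq_condexp h0 h1 (i - 1) (fun τ => Z' τ ^ 2)
  filter_upwards [hc, hv2] with ω e1 e2
  rw [e1, ← e2]
  exact Stmt12Aux.pointwise_bound h0 h1 f hlip hi him ω
end

section
/- Let {Y_0,…,Y_m} be a martingale with differences Z_i = Y_i − Y_{i−1} and predictable quadratic variation W_i = Σ_{j≤i} E[Z_j² | past], and suppose |Z_i| ≤ R and W_m ≤ σ² almost surely. Then for all s ≥ 0, Pr[Y_m − Y_0 ≥ s] ≤ exp(−(s²/2)/(σ² + Rs/3)). -/
open MeasureTheory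

lemma expA {x : ℝ} (hx : x ≤ 0) : Real.exp x ≤ 1 + x + x ^ 2 / 2 := by
  have hder : ∀ y : ℝ, HasDerivAt (fun x : ℝ => 1 + x + x ^ 2 / 2 - Real.exp x)
      (0 + 1 + 2 * y ^ 1 / 2 - Real.exp y) y := fun y =>
    (((hasDerivAt_const y (1:ℝ)).add (hasDerivAt_id y)).add
      ((hasDerivAt_pow 2 y).div_const 2)).sub (Real.hasDerivAt_exp y)
  have h : AntitoneOn (fun x : ℝ => 1 + x + x ^ 2 / 2 - Real.exp x) (Set.Iic 0) := by
    apply antitoneOn_of_deriv_nonpos (convex_Iic 0)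
    · exact fun y _ => (hder y).continuousAt.continuousWithinAt
    · exact fun y _ => (hder y).differentiableAt.differentiableWithinAt
    · intro y hy
      rw [(hder y).deriv]
      have hy0 : y < 0 := by simpa using hy
      nlinarith [Real.add_one_le_exp y]
  have h0 := h (Set.mem_Iic.2 hx) (Set.mem_Iic.2 le_rfl) hx
  simp only [Real.exp_zero] at h0
  nlinarith

lemma expB1 {x : ℝ} (hx : 0 ≤ x) : Real.exp x * (2 - x) ≤ 2 + x := by
  have hder : ∀ y : ℝ, HasDerivAt (fun x : ℝ => 2 + x - Real.exp x * (2 - x))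
      (0 + 1 - (Real.exp y * (2 - y) + Real.exp y * (0 - 1))) y := fun y =>
    ((hasDerivAt_const y (2:ℝ)).add (hasDerivAt_id y)).sub
      ((Real.hasDerivAt_exp y).mul ((hasDerivAt_const y (2:ℝ)).sub (hasDerivAt_id y)))
  have h : MonotoneOn (fun x : ℝ => 2 + x - Real.exp x * (2 - x)) (Set.Ici 0) := by
    apply monotoneOn_of_deriv_nonneg (convex_Ici 0)
    · exact fun y _ => (hder y).continuousAt.continuousWithinAt
    · exact fun y _ => (hder y).differentiableAt.differentiableWithinAt
    · intro y hy
      rw [(hder y).deriv]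
      have h2 : Real.exp y * (1 - y) ≤ 1 := by
        have h := Real.add_one_le_exp (-y)
        calc Real.exp y * (1 - y) ≤ Real.exp y * Real.exp (-y) :=
              mul_le_mul_of_nonneg_left (by linarith) (Real.exp_pos y).le
          _ = 1 := by rw [← Real.exp_add]; simp
      nlinarith
  have h0 := h (Set.mem_Ici.2 le_rfl) (Set.mem_Ici.2 hx) hx
  simp only [Real.exp_zero] at h0
  nlinarith

lemma expB {x : ℝ} (hx : 0 ≤ x) : Real.exp x * (1 - x / 3) ≤ 1 + 2 * x / 3 + x ^ 2 / 6 := by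
  have hder : ∀ y : ℝ, HasDerivAt (fun x : ℝ => 1 + 2 * x / 3 + x ^ 2 / 6 - Real.exp x * (1 - x / 3))
      (0 + 2 * 1 / 3 + 2 * y ^ 1 / 6 - (Real.exp y * (1 - y / 3) + Real.exp y * (0 - 1 / 3)))
      y := fun y =>
    (((hasDerivAt_const y (1:ℝ)).add
        (((hasDerivAt_id y).const_mul 2).div_const 3)).add
        ((hasDerivAt_pow 2 y).div_const 6)).sub
      ((Real.hasDerivAt_exp y).mul
        ((hasDerivAt_const y (1:ℝ)).sub ((hasDerivAt_id y).div_const 3)))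
  have h : MonotoneOn (fun x : ℝ => 1 + 2 * x / 3 + x ^ 2 / 6 - Real.exp x * (1 - x / 3))
      (Set.Ici 0) := by
    apply monotoneOn_of_deriv_nonneg (convex_Ici 0)
    · exact fun y _ => (hder y).continuousAt.continuousWithinAt
    · exact fun y _ => (hder y).differentiableAt.differentiableWithinAt
    · intro y hy
      rw [(hder y).deriv]
      have hy0 : 0 ≤ y := le_of_lt (by simpa using hy)
      have := expB1 hy0
      nlinarith
  have h0 := h (Set.mem_Ici.2 le_rfl) (Set.mem_Ici.2 hx) hx
  simp only [Real.exp_zero] at h0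
  nlinarith

lemma expC {b x : ℝ} (hb0 : 0 ≤ b) (hb3 : b < 3) (hxb : x ≤ b) :
    Real.exp x ≤ 1 + x + x ^ 2 / (2 * (1 - b / 3)) := by
  have hd : 0 < 1 - b / 3 := by linarith
  rcases le_or_gt x 0 with hx | hx
  · have h1 := expA hx
    have h2 : x ^ 2 / 2 ≤ x ^ 2 / (2 * (1 - b / 3)) := by
      apply div_le_div_of_nonneg_left (sq_nonneg x) (by linarith)
      nlinarith
    linarith
  · have hx0 : 0 ≤ x := hx.le
    have hdx : 0 < 1 - x / 3 := by linarith
    have h1 := expB hx0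
    have h2 : Real.exp x ≤ 1 + x + x ^ 2 / (2 * (1 - x / 3)) := by
      have hq : x ^ 2 / (2 * (1 - x / 3)) * (2 * (1 - x / 3)) = x ^ 2 :=
        div_mul_cancel₀ _ (by positivity)
      nlinarith [hq, hdx, h1]
    have h3 : x ^ 2 / (2 * (1 - x / 3)) ≤ x ^ 2 / (2 * (1 - b / 3)) := by
      apply div_le_div_of_nonneg_left (sq_nonneg x) (by linarith)
      nlinarith
    linarith

lemma expD {l R z : ℝ} (hl : 0 ≤ l) (hR : 0 < R) (hb : l * R < 3) (hz : |z| ≤ R) :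
    Real.exp (l * z) ≤ 1 + l * z + l ^ 2 / (2 * (1 - l * R / 3)) * z ^ 2 := by
  have hzR : z ≤ R := (abs_le.1 hz).2
  have hx : l * z ≤ l * R := mul_le_mul_of_nonneg_left hzR hl
  have h := expC (mul_nonneg hl hR.le) hb hx
  have he : (l * z) ^ 2 / (2 * (1 - l * R / 3)) = l ^ 2 / (2 * (1 - l * R / 3)) * z ^ 2 := by
    ring
  linarith [he ▸ h]


/-- Freedman's inequality: for a martingale `Y₀, …, Y_m` with differences
`Zᵢ = Yᵢ - Y_{i-1}` bounded by `R` and predictable quadratic variation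
`W_m = Σ_j E[Z_j² | ℱ_{j-1}]` bounded by `σ²` almost surely,
`Pr[Y_m - Y₀ ≥ s] ≤ exp(-(s²/2)/(σ² + R·s/3))`. -/
theorem stmt_14 {Ω : Type} [m0 : MeasurableSpace Ω] (μ : Measure Ω)
    [IsProbabilityMeasure μ]
    (ℱ : Filtration ℕ m0) (Y : ℕ → Ω → ℝ) (hY : Martingale Y ℱ μ)
    (m : ℕ) (R σ2 : ℝ)
    (Z : ℕ → Ω → ℝ) (hZ : ∀ i, Z i = fun ω => Y i ω - Y (i - 1) ω)
    (W : ℕ → Ω → ℝ)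
    (hW : ∀ i, W i = fun ω =>
      ∑ j ∈ Finset.Icc 1 i, (μ[fun ω' => (Z j ω') ^ 2|ℱ (j - 1)]) ω)
    (hR : ∀ i, 1 ≤ i → i ≤ m → ∀ᵐ ω ∂μ, |Z i ω| ≤ R)
    (hσ : ∀ᵐ ω ∂μ, W m ω ≤ σ2) :
    ∀ s : ℝ, 0 ≤ s →
      (μ {ω | s ≤ Y m ω - Y 0 ω}).toReal ≤
        Real.exp (-(s ^ 2 / 2) / (σ2 + R * s / 3)) := by
  intro s hs0
  have hprob : ∀ A : Set Ω, (μ A).toReal ≤ 1 := fun A => by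
    rw [← ENNReal.toReal_one]
    exact ENNReal.toReal_mono (by simp) prob_le_one
  rcases eq_or_lt_of_le hs0 with hs | hs
  · rw [← hs]
    have h0 : -((0 : ℝ) ^ 2 / 2) / (σ2 + R * 0 / 3) = 0 := by norm_num
    rw [h0, Real.exp_zero]
    exact hprob _
  -- now 0 < s
  have htel : ∀ i, ∀ ω, Y i ω - Y 0 ω = ∑ j ∈ Finset.Icc 1 i, Z j ω := by
    intro i
    induction i with
    | zero => intro ω; simp
    | succ n ih =>
      intro ω
      rw [Finset.sum_Icc_succ_top (Nat.succ_le_succ (Nat.zero_le n)), ← ih ω]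
      simp only [hZ (n + 1)]
      simp
  have hcomb : ∀ p : ℕ → Ω → Prop, (∀ j, 1 ≤ j → j ≤ m → ∀ᵐ ω ∂μ, p j ω) →
      ∀ᵐ ω ∂μ, ∀ j ∈ Finset.Icc 1 m, p j ω := by
    intro p hp
    refine ae_all_iff.2 fun j => ?_
    by_cases hj : j ∈ Finset.Icc 1 m
    · obtain ⟨h1, h2⟩ := Finset.mem_Icc.1 hj
      filter_upwards [hp j h1 h2] with ω h _
      exact h
    · exact ae_of_all _ fun ω h => absurd h hj
  have hnull : (∀ j, 1 ≤ j → j ≤ m → Z j =ᵐ[μ] 0) →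
      (μ {ω | s ≤ Y m ω - Y 0 ω}).toReal ≤
        Real.exp (-(s ^ 2 / 2) / (σ2 + R * s / 3)) := by
    intro hz0
    have h0 : μ {ω | s ≤ Y m ω - Y 0 ω} = 0 := by
      rw [measure_eq_zero_iff_ae_notMem]
      have hae : ∀ᵐ ω ∂μ, ∀ j ∈ Finset.Icc 1 m, Z j ω = 0 :=
        hcomb _ fun j h1 h2 => (hz0 j h1 h2).mono fun ω h => h
      filter_upwards [hae] with ω hω
      simp only [Set.mem_setOf_eq, not_le]
      have h1 : Y m ω - Y 0 ω = 0 := by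
        rw [htel m ω]
        exact Finset.sum_eq_zero hω
      linarith
    rw [h0]
    simp only [ENNReal.toReal_zero]
    exact (Real.exp_pos _).le
  by_cases hm0 : m = 0
  · exact hnull fun j hj1 hjm => absurd (hj1.trans hjm) (by omega)
  have hm1 : 1 ≤ m := Nat.one_le_iff_ne_zero.mpr hm0
  haveI : (MeasureTheory.ae μ).NeBot := ae_neBot.2 (IsProbabilityMeasure.ne_zero μ)
  have hR0 : 0 ≤ R := by
    obtain ⟨ω, hω⟩ := (hR 1 le_rfl hm1).exists
    exact (abs_nonneg _).trans hω
  -- basic integrability / measurability facts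
  have hZsm : ∀ j, StronglyMeasurable[ℱ j] (Z j) := fun j => by
    rw [hZ j]
    exact (hY.stronglyAdapted j).sub ((hY.stronglyAdapted (j - 1)).mono (ℱ.mono (Nat.sub_le j 1)))
  have hZint : ∀ j, Integrable (Z j) μ := fun j => by
    rw [hZ j]
    exact (hY.integrable j).sub (hY.integrable (j - 1))
  have hZ2int : ∀ j, 1 ≤ j → j ≤ m → Integrable (fun ω => (Z j ω) ^ 2) μ := by
    intro j hj1 hjm
    refine Integrable.mono' (integrable_const (R ^ 2))
      ((((hZsm j).mono (ℱ.le j)).measurable.pow_const 2).aestronglyMeasurable) ?_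
    filter_upwards [hR j hj1 hjm] with ω hω
    rw [Real.norm_eq_abs, abs_pow]
    exact pow_le_pow_left₀ (abs_nonneg _) hω 2
  set V : ℕ → Ω → ℝ := fun j => μ[fun ω' => (Z j ω') ^ 2|ℱ (j - 1)] with hVdef
  have hVnn : ∀ j, 0 ≤ᵐ[μ] V j := fun j =>
    condExp_nonneg (ae_of_all _ fun ω => sq_nonneg _)
  have hVnnall : ∀ᵐ ω ∂μ, ∀ j ∈ Finset.Icc 1 m, 0 ≤ V j ω :=
    hcomb _ fun j _ _ => hVnn j
  rcases le_or_gt R 0 with hRle | hRpos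
  · refine hnull fun j hj1 hjm => ?_
    filter_upwards [hR j hj1 hjm] with ω hω
    have : |Z j ω| = 0 := le_antisymm (hω.trans hRle) (abs_nonneg _)
    simpa [abs_eq_zero] using this
  rcases le_or_gt σ2 0 with hσle | hσ2
  · refine hnull fun j hj1 hjm => ?_
    have hV0 : V j =ᵐ[μ] 0 := by
      filter_upwards [hσ, hVnnall] with ω h1 h2
      rw [hW m] at h1
      simp only at h1
      have hle : V j ω ≤ ∑ k ∈ Finset.Icc 1 m, V k ω :=
        Finset.single_le_sum (f := fun k => V k ω) (fun k hk => h2 k hk)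
          (Finset.mem_Icc.2 ⟨hj1, hjm⟩)
      have hge : 0 ≤ V j ω := h2 j (Finset.mem_Icc.2 ⟨hj1, hjm⟩)
      have : V j ω = 0 := le_antisymm (by linarith) hge
      simpa using this
    have hint0 : ∫ ω, (Z j ω) ^ 2 ∂μ = 0 := by
      rw [← integral_condExp (ℱ.le (j - 1)) (f := fun ω => (Z j ω) ^ 2)]
      rw [integral_congr_ae hV0]
      simp
    have hZ20 : (fun ω => (Z j ω) ^ 2) =ᵐ[μ] 0 :=
      (integral_eq_zero_iff_of_nonneg (fun ω => sq_nonneg _) (hZ2int j hj1 hjm)).1 hint0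
    filter_upwards [hZ20] with ω hω
    simp only [Pi.zero_apply] at hω ⊢
    exact pow_eq_zero_iff (by norm_num) |>.1 hω
  -- MAIN CASE : 0 < s, 0 < R, 0 < σ2, 1 ≤ m
  obtain ⟨D, hDdef⟩ : ∃ D : ℝ, D = σ2 + R * s / 3 := ⟨_, rfl⟩
  rw [← hDdef]
  have hD : 0 < D := by
    have h1 : 0 ≤ R * s / 3 := by positivity
    rw [hDdef]; linarith
  obtain ⟨l, hldef⟩ : ∃ l : ℝ, l = s / D := ⟨_, rfl⟩
  have hl : 0 < l := hldef ▸ div_pos hs hD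
  have hlD : l * D = s := by rw [hldef]; exact div_mul_cancel₀ s hD.ne'
  have hlR : l * R < 3 := by
    rw [hldef, div_mul_eq_mul_div, div_lt_iff₀ hD, hDdef]
    nlinarith
  have hden : 0 < 2 * (1 - l * R / 3) := by linarith
  obtain ⟨c, hcdef⟩ : ∃ c : ℝ, c = l ^ 2 / (2 * (1 - l * R / 3)) := ⟨_, rfl⟩
  have hc0 : 0 ≤ c := hcdef ▸ div_nonneg (sq_nonneg l) hden.le
  have hA1 : 1 - l * R / 3 = σ2 / D := by
    have hDne : D ≠ 0 := hD.ne'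
    rw [eq_div_iff hDne]
    rw [hldef, hDdef]
    have hDne' : σ2 + R * s / 3 ≠ 0 := by rw [← hDdef]; exact hDne
    field_simp
    ring
  have hcσ : c * σ2 = l * s / 2 := by
    rw [hcdef, hA1, ← hlD]
    field_simp
  have hexpeq : c * σ2 - l * s = -(s ^ 2 / 2) / D := by
    rw [hcσ, ← hlD]
    field_simp
    ring
  -- martingale difference has zero conditional expectation
  have hZcond : ∀ n : ℕ, μ[Z (n + 1)|ℱ n] =ᵐ[μ] 0 := by
    intro n
    have h1 : μ[Y (n + 1)|ℱ n] =ᵐ[μ] Y n := hY.condExp_ae_eq (Nat.le_succ n)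
    have h2 : μ[Y n|ℱ n] = Y n :=
      condExp_of_stronglyMeasurable (ℱ.le n) (hY.stronglyAdapted n) (hY.integrable n)
    have h3 : μ[Z (n + 1)|ℱ n] =ᵐ[μ] μ[Y (n + 1)|ℱ n] - μ[Y n|ℱ n] := by
      rw [hZ (n + 1)]
      exact condExp_sub (hY.integrable (n + 1)) (hY.integrable n) _
    filter_upwards [h1, h3] with ω hω1 hω3
    have h2' : (μ[Y n|ℱ n]) ω = Y n ω := congrFun h2 ω
    simp only [Pi.sub_apply] at hω3
    rw [hω3, hω1, h2', Pi.zero_apply, sub_self]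
  -- measurability of W and S
  have hWsm : ∀ i, StronglyMeasurable[ℱ i] (W i) := by
    intro i
    rw [hW i]
    apply Finset.stronglyMeasurable_fun_sum
    intro j hj
    have hji : j - 1 ≤ i := le_trans (Nat.sub_le j 1) (Finset.mem_Icc.1 hj).2
    exact stronglyMeasurable_condExp.mono (ℱ.mono hji)
  obtain ⟨S, hSdef⟩ : ∃ S : ℕ → Ω → ℝ,
      S = fun i ω => Real.exp (l * (Y i ω - Y 0 ω) - c * W i ω) := ⟨_, rfl⟩
  have hSsm : ∀ i, StronglyMeasurable[ℱ i] (S i) := by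
    intro i
    rw [hSdef]
    exact Real.continuous_exp.comp_stronglyMeasurable
      ((((hY.stronglyAdapted i).sub ((hY.stronglyAdapted 0).mono (ℱ.mono (Nat.zero_le i)))).const_mul l).sub
        ((hWsm i).const_mul c))
  have hSpos : ∀ i ω, 0 < S i ω := by
    intro i ω
    rw [hSdef]
    exact Real.exp_pos _
  have hWnn : ∀ i, i ≤ m → ∀ᵐ ω ∂μ, 0 ≤ W i ω := by
    intro i him
    filter_upwards [hVnnall] with ω hω
    rw [hW i]
    refine Finset.sum_nonneg fun j hj => ?_
    obtain ⟨hj1, hj2⟩ := Finset.mem_Icc.1 hj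
    exact hω j (Finset.mem_Icc.2 ⟨hj1, hj2.trans him⟩)
  have hYb : ∀ i, i ≤ m → ∀ᵐ ω ∂μ, |Y i ω - Y 0 ω| ≤ i * R := by
    intro i him
    filter_upwards [hcomb (fun j ω => |Z j ω| ≤ R) hR] with ω hω
    rw [htel i ω]
    calc |∑ j ∈ Finset.Icc 1 i, Z j ω| ≤ ∑ j ∈ Finset.Icc 1 i, |Z j ω| :=
        Finset.abs_sum_le_sum_abs _ _
      _ ≤ ∑ _j ∈ Finset.Icc 1 i, R := by
          refine Finset.sum_le_sum fun j hj => ?_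
          obtain ⟨hj1, hj2⟩ := Finset.mem_Icc.1 hj
          exact hω j (Finset.mem_Icc.2 ⟨hj1, hj2.trans him⟩)
      _ = i * R := by
          rw [Finset.sum_const, Nat.card_Icc]
          simp [nsmul_eq_mul]
  have hSb : ∀ i, i ≤ m → ∀ᵐ ω ∂μ, ‖S i ω‖ ≤ Real.exp (l * (i * R)) := by
    intro i him
    filter_upwards [hYb i him, hWnn i him] with ω h1 h2
    rw [hSdef]
    simp only [Real.norm_eq_abs, Real.abs_exp]
    apply Real.exp_le_exp.2
    have h3 : l * (Y i ω - Y 0 ω) ≤ l * (i * R) :=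
      mul_le_mul_of_nonneg_left ((le_abs_self _).trans h1) hl.le
    nlinarith [mul_nonneg hc0 h2]
  have hSint : ∀ i, i ≤ m → Integrable (S i) μ := fun i him =>
    Integrable.mono' (integrable_const _)
      (((hSsm i).mono (ℱ.le i)).aestronglyMeasurable) (hSb i him)
  -- the exponential supermartingale property
  have hmain : ∀ i, i ≤ m → ∫ ω, S i ω ∂μ ≤ 1 := by
    intro i
    induction i with
    | zero =>
      intro _
      have hS0 : S 0 = fun _ => 1 := by
        rw [hSdef]
        funext ω
        have hW0 : W 0 ω = 0 := by rw [hW 0]; simp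
        simp [hW0]
      rw [hS0]
      simp
    | succ n ih =>
      intro hn1
      have hn : n ≤ m := Nat.le_of_succ_le hn1
      have h1n : 1 ≤ n + 1 := Nat.succ_le_succ (Nat.zero_le n)
      have hVsm : StronglyMeasurable[ℱ n] (V (n + 1)) := stronglyMeasurable_condExp
      have hWstep : ∀ ω, W (n + 1) ω = W n ω + V (n + 1) ω := by
        intro ω
        rw [hW (n + 1), hW n]
        exact Finset.sum_Icc_succ_top h1n _
      have hZn : ∀ ω, Z (n + 1) ω = Y (n + 1) ω - Y n ω := fun ω => by
        rw [hZ (n + 1)]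
        simp
      have hSstep : ∀ ω, S (n + 1) ω =
          (S n ω * Real.exp (-(c * V (n + 1) ω))) * Real.exp (l * Z (n + 1) ω) := by
        intro ω
        simp only [hSdef]
        rw [← Real.exp_add, ← Real.exp_add]
        congr 1
        rw [hWstep ω, hZn ω]
        ring
      obtain ⟨A, hAdef⟩ : ∃ A : Ω → ℝ,
          A = fun ω => S n ω * Real.exp (-(c * V (n + 1) ω)) := ⟨_, rfl⟩
      have hAsm : StronglyMeasurable[ℱ n] A := by
        rw [hAdef]
        exact (hSsm n).mul
          (Real.continuous_exp.comp_stronglyMeasurable ((hVsm.const_mul c).neg))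
      have hAnn : ∀ ω, 0 ≤ A ω := by
        intro ω
        rw [hAdef]
        exact mul_nonneg (hSpos n ω).le (Real.exp_pos _).le
      have hAb : ∀ᵐ ω ∂μ, ‖A ω‖ ≤ Real.exp (l * (n * R)) := by
        filter_upwards [hSb n hn, hVnnall] with ω h1 h2
        have hV0 : 0 ≤ V (n + 1) ω := h2 (n + 1) (Finset.mem_Icc.2 ⟨h1n, hn1⟩)
        have he1 : Real.exp (-(c * V (n + 1) ω)) ≤ 1 := by
          have := Real.exp_le_exp.2 (neg_nonpos.2 (mul_nonneg hc0 hV0))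
          rwa [Real.exp_zero] at this
        rw [hAdef]
        simp only [Real.norm_eq_abs, abs_mul, Real.abs_exp]
        rw [Real.norm_eq_abs] at h1
        calc |S n ω| * Real.exp (-(c * V (n + 1) ω)) ≤ |S n ω| * 1 :=
            mul_le_mul_of_nonneg_left he1 (abs_nonneg _)
          _ = |S n ω| := mul_one _
          _ ≤ Real.exp (l * (n * R)) := h1
      have hAint : Integrable A μ :=
        Integrable.mono' (integrable_const _)
          ((hAsm.mono (ℱ.le n)).aestronglyMeasurable) hAb
      have hgsm : StronglyMeasurable[ℱ (n + 1)] (fun ω => Real.exp (l * Z (n + 1) ω)) :=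
        Real.continuous_exp.comp_stronglyMeasurable ((hZsm (n + 1)).const_mul l)
      have hgb : ∀ᵐ ω ∂μ, ‖Real.exp (l * Z (n + 1) ω)‖ ≤ Real.exp (l * R) := by
        filter_upwards [hR (n + 1) h1n hn1] with ω hω
        rw [Real.norm_eq_abs, Real.abs_exp]
        exact Real.exp_le_exp.2 (mul_le_mul_of_nonneg_left ((le_abs_self _).trans hω) hl.le)
      have hgint : Integrable (fun ω => Real.exp (l * Z (n + 1) ω)) μ :=
        Integrable.mono' (integrable_const _)
          ((hgsm.mono (ℱ.le (n + 1))).aestronglyMeasurable) hgb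
      have hAgint : Integrable (A * fun ω => Real.exp (l * Z (n + 1) ω)) μ := by
        refine Integrable.mono' (integrable_const (Real.exp (l * (n * R)) * Real.exp (l * R)))
          (((hAsm.mono (ℱ.le n)).aestronglyMeasurable).mul
            ((hgsm.mono (ℱ.le (n + 1))).aestronglyMeasurable)) ?_
        filter_upwards [hAb, hgb] with ω h1 h2
        rw [Pi.mul_apply, norm_mul]
        exact mul_le_mul h1 h2 (norm_nonneg _) ((norm_nonneg _).trans h1)
      have hrhsint : Integrable (fun ω => 1 + l * Z (n + 1) ω + c * Z (n + 1) ω ^ 2) μ :=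
        ((integrable_const 1).add ((hZint (n + 1)).const_mul l)).add
          ((hZ2int (n + 1) h1n hn1).const_mul c)
      have hptw : ∀ᵐ ω ∂μ, Real.exp (l * Z (n + 1) ω) ≤
          1 + l * Z (n + 1) ω + c * Z (n + 1) ω ^ 2 := by
        filter_upwards [hR (n + 1) h1n hn1] with ω hω
        have := expD hl.le hRpos hlR hω
        rw [hcdef]
        linarith
      have hce1 : μ[fun ω => Real.exp (l * Z (n + 1) ω)|ℱ n] ≤ᵐ[μ]
          μ[fun ω => 1 + l * Z (n + 1) ω + c * Z (n + 1) ω ^ 2|ℱ n] :=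
        condExp_mono hgint hrhsint hptw
      have hce2 : μ[fun ω => 1 + l * Z (n + 1) ω + c * Z (n + 1) ω ^ 2|ℱ n] =ᵐ[μ]
          fun ω => 1 + c * V (n + 1) ω := by
        have e1 : μ[fun ω => 1 + l * Z (n + 1) ω + c * Z (n + 1) ω ^ 2|ℱ n] =ᵐ[μ]
            μ[fun ω => 1 + l * Z (n + 1) ω|ℱ n] + μ[fun ω => c * Z (n + 1) ω ^ 2|ℱ n] :=
          condExp_add (f := fun ω => 1 + l * Z (n + 1) ω)
            (g := fun ω => c * Z (n + 1) ω ^ 2)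
            ((integrable_const 1).add ((hZint (n + 1)).const_mul l))
            ((hZ2int (n + 1) h1n hn1).const_mul c) _
        have e2 : μ[fun ω => 1 + l * Z (n + 1) ω|ℱ n] =ᵐ[μ]
            μ[fun _ => (1 : ℝ)|ℱ n] + μ[fun ω => l * Z (n + 1) ω|ℱ n] :=
          condExp_add (f := fun _ => (1 : ℝ)) (g := fun ω => l * Z (n + 1) ω)
            (integrable_const 1) ((hZint (n + 1)).const_mul l) _
        have e3 : μ[fun _ : Ω => (1 : ℝ)|ℱ n] = fun _ => (1 : ℝ) := condExp_const (ℱ.le n) 1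
        have e4 : μ[fun ω => l * Z (n + 1) ω|ℱ n] =ᵐ[μ] l • μ[Z (n + 1)|ℱ n] :=
          condExp_smul (𝕜 := ℝ) l (Z (n + 1)) _
        have e5 := hZcond n
        have e6 : μ[fun ω => c * Z (n + 1) ω ^ 2|ℱ n] =ᵐ[μ]
            c • μ[fun ω => Z (n + 1) ω ^ 2|ℱ n] :=
          condExp_smul (𝕜 := ℝ) c (fun ω => Z (n + 1) ω ^ 2) _
        have hV : μ[fun ω => Z (n + 1) ω ^ 2|ℱ n] = V (n + 1) := by rw [hVdef]; rfl
        filter_upwards [e1, e2, e4, e5, e6] with ω h1 h2 h4 h5 h6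
        rw [h1, Pi.add_apply, h2, Pi.add_apply, congrFun e3 ω, h4, Pi.smul_apply,
          h5, Pi.zero_apply, h6, Pi.smul_apply, hV]
        simp [smul_eq_mul]
      have hpull : μ[A * (fun ω => Real.exp (l * Z (n + 1) ω))|ℱ n] =ᵐ[μ]
          A * μ[fun ω => Real.exp (l * Z (n + 1) ω)|ℱ n] :=
        condExp_mul_of_stronglyMeasurable_left hAsm hAgint hgint
      have hfinal : μ[A * (fun ω => Real.exp (l * Z (n + 1) ω))|ℱ n] ≤ᵐ[μ] S n := by
        filter_upwards [hpull, hce1, hce2] with ω h1 h2 h3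
        rw [h1, Pi.mul_apply]
        have hle : (μ[fun ω => Real.exp (l * Z (n + 1) ω)|ℱ n]) ω ≤
            1 + c * V (n + 1) ω := le_trans h2 (le_of_eq h3)
        have hexpc : 1 + c * V (n + 1) ω ≤ Real.exp (c * V (n + 1) ω) := by
          linarith [Real.add_one_le_exp (c * V (n + 1) ω)]
        calc A ω * (μ[fun ω => Real.exp (l * Z (n + 1) ω)|ℱ n]) ω
            ≤ A ω * Real.exp (c * V (n + 1) ω) :=
              mul_le_mul_of_nonneg_left (hle.trans hexpc) (hAnn ω)
          _ = S n ω := by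
              rw [hAdef]
              simp only
              rw [mul_assoc, ← Real.exp_add, neg_add_cancel, Real.exp_zero, mul_one]
      have hstep : ∫ ω, S (n + 1) ω ∂μ ≤ ∫ ω, S n ω ∂μ := by
        have h1 : ∫ ω, S (n + 1) ω ∂μ =
            ∫ ω, (A * fun ω => Real.exp (l * Z (n + 1) ω)) ω ∂μ := by
          refine integral_congr_ae (ae_of_all _ fun ω => ?_)
          rw [Pi.mul_apply]
          simp only [hAdef]
          exact hSstep ω
        rw [h1, ← integral_condExp (ℱ.le n)]
        exact integral_mono_ae integrable_condExp (hSint n hn) hfinal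
      linarith [ih hn, hstep]
  -- Chernoff bound
  obtain ⟨ε, hεdef⟩ : ∃ ε : ℝ, ε = Real.exp (l * s - c * σ2) := ⟨_, rfl⟩
  have hε : 0 < ε := hεdef ▸ Real.exp_pos _
  have hsub : ∀ᵐ ω ∂μ, ω ∈ {ω | s ≤ Y m ω - Y 0 ω} → ω ∈ {ω | ε ≤ S m ω} := by
    filter_upwards [hσ] with ω hw hmem
    rw [hεdef, hSdef]
    simp only
    apply Real.exp_le_exp.2
    have h1 : l * s ≤ l * (Y m ω - Y 0 ω) := mul_le_mul_of_nonneg_left hmem hl.le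
    have h2 : c * W m ω ≤ c * σ2 := mul_le_mul_of_nonneg_left hw hc0
    linarith
  have hmeasle : μ {ω | s ≤ Y m ω - Y 0 ω} ≤ μ {ω | ε ≤ S m ω} :=
    measure_mono_ae (hsub.mono fun ω h => h)
  have hmarkov := mul_meas_ge_le_integral_of_nonneg
    (ae_of_all _ fun ω => (hSpos m ω).le) (hSint m le_rfl) ε
  have h2 := hmain m le_rfl
  have h3 : (μ {ω | ε ≤ S m ω}).toReal ≤ 1 / ε := by
    rw [le_div_iff₀ hε, ← measureReal_def]
    nlinarith [hmarkov, h2]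
  have h4 : (μ {ω | s ≤ Y m ω - Y 0 ω}).toReal ≤ 1 / ε :=
    le_trans (ENNReal.toReal_mono ((measure_ne_top μ _)) hmeasle) h3
  have h5 : 1 / ε = Real.exp (-(s ^ 2 / 2) / D) := by
    rw [hεdef, one_div, ← Real.exp_neg]
    congr 1
    rw [neg_sub]
    linarith [hexpeq]
  rw [← h5]
  exact h4
end

section
/- Let S be a finite collection of more than 2^{k−1} distinct nonempty proper subsets of a finite set V. Then one can choose sets S_1,…,S_i ∈ S with i ≤ k−1 such that the Venn diagram Venn(S_1,…,S_i) has at least k atoms. -/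
/-- The number of atoms (nonempty regions) in the Venn diagram of the sets
`S 0, …, S (m-1)`. -/
def vennAtoms {V : Type*} [Fintype V] [DecidableEq V] {m : ℕ}
    (S : Fin m → Finset V) : ℕ :=
  (Finset.univ.filter (fun f : Fin m → Bool =>
    (Finset.univ.filter (fun v : V => ∀ i, (v ∈ S i ↔ f i = true))).Nonempty)).card

namespace VennAux

open Finset

variable {V : Type*} [Fintype V] [DecidableEq V]

/-- The signature of a point with respect to a family of sets. -/
def sig {m : ℕ} (S : Fin m → Finset V) (v : V) : Fin m → Bool :=
  fun i => decide (v ∈ S i)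

lemma vennAtoms_eq {m : ℕ} (S : Fin m → Finset V) :
    vennAtoms S = (Finset.univ.image (sig S)).card := by
  unfold vennAtoms
  congr 1
  ext f
  simp only [mem_filter, mem_univ, true_and, mem_image, Finset.Nonempty]
  constructor
  · rintro ⟨v, hv⟩
    exact ⟨v, funext fun i => by
      have hi := hv i
      by_cases h : v ∈ S i
      · simp [sig, h, hi.mp h]
      · have hf : f i = false := by
          cases hfi : f i
          · rfl
          · exact absurd (hi.mpr hfi) h
        simp [sig, h, hf]⟩
  · rintro ⟨v, -, rfl⟩
    exact ⟨v, by simp [sig]⟩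

lemma count {m : ℕ} (T : Fin m → Finset V) (𝒮 : Finset (Finset V))
    (h : ∀ S ∈ 𝒮, ∀ v w : V, sig T v = sig T w → (v ∈ S ↔ w ∈ S)) :
    𝒮.card ≤ 2 ^ vennAtoms T := by
  rw [vennAtoms_eq, ← Finset.card_powerset]
  refine Finset.card_le_card_of_injOn (fun S => S.image (sig T)) ?_ ?_
  · intro S _
    simp only [mem_powerset]
    exact mem_coe.mpr (mem_powerset.mpr (image_subset_image (f := sig T) (subset_univ S)))
  · intro S₁ h₁ S₂ h₂ he
    have key : ∀ S S' : Finset V, S ∈ 𝒮 → S' ∈ 𝒮 →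
        S.image (sig T) = S'.image (sig T) → ∀ v ∈ S, v ∈ S' := by
      intro S S' hSm hSm' heq v hv
      have : sig T v ∈ S'.image (sig T) := heq ▸ mem_image_of_mem _ hv
      obtain ⟨w, hw, hwv⟩ := mem_image.mp this
      exact (h S' hSm' v w hwv.symm).mpr hw
    ext v
    exact ⟨key S₁ S₂ h₁ h₂ he v, key S₂ S₁ h₂ h₁ he.symm v⟩

lemma step {m : ℕ} (T : Fin m → Finset V) (S : Finset V) (v w : V)
    (hvw : sig T v = sig T w) (hv : v ∈ S) (hw : w ∉ S) :
    vennAtoms T < vennAtoms (Fin.snoc T S) := by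
  classical
  set T' : Fin (m + 1) → Finset V := Fin.snoc T S with hT'
  set π : (Fin (m + 1) → Bool) → (Fin m → Bool) := fun f => f ∘ Fin.castSucc with hπ
  have hπsig : ∀ u : V, π (sig T' u) = sig T u := by
    intro u
    funext j
    simp [π, sig, T', Fin.snoc_castSucc]
  set s : Finset (Fin m.succ → Bool) := Finset.univ.image (sig T') with hs
  set t : Finset (Fin m → Bool) := Finset.univ.image (sig T) with ht
  have hne : sig T' v ≠ sig T' w := by
    intro hcon
    have := congrFun hcon (Fin.last m)
    simp [sig, T', Fin.snoc_last, hv, hw] at this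
  have hvs : sig T' v ∈ s := mem_image_of_mem _ (mem_univ v)
  have hws : sig T' w ∈ s := mem_image_of_mem _ (mem_univ w)
  have himg : (s.erase (sig T' w)).image π = t := by
    apply Finset.Subset.antisymm
    · intro u hu
      obtain ⟨y, hy, rfl⟩ := mem_image.mp hu
      obtain ⟨z, -, rfl⟩ := mem_image.mp (mem_of_mem_erase hy)
      rw [hπsig]
      exact mem_image_of_mem _ (mem_univ z)
    · intro u hu
      obtain ⟨z, -, rfl⟩ := mem_image.mp hu
      by_cases hz : sig T' z = sig T' w
      · have heq : sig T z = π (sig T' v) := by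
          rw [← hπsig z, hz, hπsig w, ← hvw, hπsig v]
        exact mem_image.mpr ⟨sig T' v, mem_erase.mpr ⟨hne, hvs⟩, heq.symm⟩
      · exact mem_image.mpr ⟨sig T' z, mem_erase.mpr ⟨hz, mem_image_of_mem _ (mem_univ z)⟩,
          hπsig z⟩
  have hcard1 : t.card ≤ (s.erase (sig T' w)).card := himg ▸ Finset.card_image_le
  have hcard2 : (s.erase (sig T' w)).card < s.card := Finset.card_erase_lt_of_mem hws
  rw [vennAtoms_eq, vennAtoms_eq]
  exact lt_of_le_of_lt hcard1 hcard2

end VennAux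

open VennAux

/-- From more than `2^(k-1)` distinct nonempty proper subsets of a finite set
one can choose `i ≤ k-1` of them whose Venn diagram has at least `k` atoms. -/
theorem stmt_15 {V : Type*} [Fintype V] [DecidableEq V] (k : ℕ)
    (𝒮 : Finset (Finset V))
    (hS : ∀ S ∈ 𝒮, S ≠ ∅ ∧ S ≠ Finset.univ)
    (hcard : 2 ^ (k - 1) < 𝒮.card) :
    ∃ i : ℕ, i ≤ k - 1 ∧ ∃ T : Fin i → Finset V,
      (∀ j, T j ∈ 𝒮) ∧ k ≤ vennAtoms T := by
  classical
  obtain ⟨S₀, hS₀⟩ : 𝒮.Nonempty := Finset.card_pos.mp (lt_of_le_of_lt (Nat.zero_le _) hcard)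
  obtain ⟨v₀, hv₀⟩ : S₀.Nonempty := Finset.nonempty_iff_ne_empty.mpr (hS S₀ hS₀).1
  have key : ∀ n, n ≤ k - 1 → ∃ i, i ≤ n ∧ ∃ T : Fin i → Finset V,
      (∀ j, T j ∈ 𝒮) ∧ min k (n + 1) ≤ vennAtoms T := by
    intro n
    induction n with
    | zero =>
      intro _
      refine ⟨0, le_refl 0, Fin.elim0, fun j => j.elim0, ?_⟩
      have h1 : 1 ≤ vennAtoms (Fin.elim0 : Fin 0 → Finset V) := by
        rw [vennAtoms_eq]
        exact Finset.card_pos.mpr ⟨_, Finset.mem_image_of_mem _ (Finset.mem_univ v₀)⟩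
      exact le_trans (min_le_right _ _) h1
    | succ n ih =>
      intro hn
      obtain ⟨i, hi, T, hT, hmin⟩ := ih (by omega)
      by_cases hk : k ≤ vennAtoms T
      · exact ⟨i, by omega, T, hT, le_trans (min_le_left _ _) hk⟩
      · push_neg at hk
        have hmin' : n + 1 ≤ vennAtoms T := by omega
        have hfind : ∃ S ∈ 𝒮, ∃ v w : V, sig T v = sig T w ∧ v ∈ S ∧ w ∉ S := by
          by_contra hcon
          push_neg at hcon
          have hall : ∀ S ∈ 𝒮, ∀ v w : V, sig T v = sig T w → (v ∈ S ↔ w ∈ S) :=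
            fun S hSm v w hvw =>
              ⟨fun hvS => hcon S hSm v w hvw hvS, fun hwS => hcon S hSm w v hvw.symm hwS⟩
          have h1 := count T 𝒮 hall
          have h2 : 2 ^ vennAtoms T ≤ 2 ^ (k - 1) :=
            Nat.pow_le_pow_right (by norm_num) (by omega)
          omega
        obtain ⟨S, hSm, v, w, hvw, hvS, hwS⟩ := hfind
        refine ⟨i + 1, by omega, Fin.snoc T S, ?_, ?_⟩
        · intro j
          refine Fin.lastCases ?_ ?_ j
          · simpa [Fin.snoc_last] using hSm
          · intro j'
            simpa [Fin.snoc_castSucc] using hT j'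
        · have hstep := step T S v w hvw hvS hwS
          have : min k (n + 1 + 1) ≤ n + 2 := min_le_right _ _
          omega
  obtain ⟨i, hi, T, hT, hmin⟩ := key (k - 1) le_rfl
  exact ⟨i, hi, T, hT, by omega⟩
end

section
/- Let λ̄ > 0, let C, P_1, …, P_r be pairwise disjoint nonempty proper subsets of the vertex set of a weighted graph G with w(∂C) ≥ λ̄ and w(∂P_i) ≥ λ̄ for all i, and suppose w(∂(C ∪ P_i)) ≤ γλ̄ for all i, where 1 ≤ γ < 2. Then for each i, the total weight of edges between C and P_i satisfies w(E[C,P_i]) ≥ (2−γ)λ̄/2, and consequently r − 1 ≤ 2γ/(2−γ). -/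
open Classical

lemma bweight_union {V : Type*} [Fintype V] [DecidableEq V]
    (w : V → V → ℝ) (hsymm : ∀ u v, w u v = w v u) (C D : Finset V)
    (hd : Disjoint C D) :
    bweight w (C ∪ D) = bweight w C + bweight w D - 2 * ∑ u ∈ C, ∑ v ∈ D, w u v := by
  have hDC : D ⊆ Cᶜ := fun x hx => Finset.mem_compl.2 (fun hxC => (Finset.disjoint_left.1 hd) hxC hx)
  have hCD : C ⊆ Dᶜ := fun x hx => Finset.mem_compl.2 (fun hxD => (Finset.disjoint_left.1 hd) hx hxD)
  have h1 : (C ∪ D)ᶜ = Cᶜ \ D := by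
    ext x; simp only [Finset.compl_union, Finset.mem_inter, Finset.mem_sdiff, Finset.mem_compl]
  have h2 : (C ∪ D)ᶜ = Dᶜ \ C := by
    ext x
    simp only [Finset.compl_union, Finset.mem_inter, Finset.mem_sdiff, Finset.mem_compl]
    tauto
  have hsplit1 : ∀ u, ∑ v ∈ Cᶜ \ D, w u v = ∑ v ∈ Cᶜ, w u v - ∑ v ∈ D, w u v := by
    intro u
    have := Finset.sum_sdiff (f := fun v => w u v) hDC
    linarith
  have hsplit2 : ∀ u, ∑ v ∈ Dᶜ \ C, w u v = ∑ v ∈ Dᶜ, w u v - ∑ v ∈ C, w u v := by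
    intro u
    have := Finset.sum_sdiff (f := fun v => w u v) hCD
    linarith
  have hswap : ∑ u ∈ D, ∑ v ∈ C, w u v = ∑ u ∈ C, ∑ v ∈ D, w u v := by
    rw [Finset.sum_comm]
    exact Finset.sum_congr rfl fun u _ => Finset.sum_congr rfl fun v _ => hsymm v u
  unfold bweight
  rw [Finset.sum_union hd]
  have e1 : ∑ u ∈ C, ∑ v ∈ (C ∪ D)ᶜ, w u v
      = ∑ u ∈ C, ∑ v ∈ Cᶜ, w u v - ∑ u ∈ C, ∑ v ∈ D, w u v := by
    rw [h1, Finset.sum_congr rfl fun u _ => hsplit1 u, Finset.sum_sub_distrib]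
  have e2 : ∑ u ∈ D, ∑ v ∈ (C ∪ D)ᶜ, w u v
      = ∑ u ∈ D, ∑ v ∈ Dᶜ, w u v - ∑ u ∈ C, ∑ v ∈ D, w u v := by
    rw [h2, Finset.sum_congr rfl fun u _ => hsplit2 u, Finset.sum_sub_distrib, hswap]
  rw [e1, e2]; ring

/-- Sunflower-of-cuts calculation: if `C, P₁, …, P_r` are pairwise disjoint
nonempty proper vertex sets with `w(∂C), w(∂Pᵢ) ≥ λ̄` and
`w(∂(C ∪ Pᵢ)) ≤ γ·λ̄` for `1 ≤ γ < 2`, then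
`w(E[C,Pᵢ]) ≥ (2-γ)·λ̄/2` for each `i`, and `r - 1 ≤ 2γ/(2-γ)`. -/
theorem stmt_16 {V : Type*} [Fintype V] [DecidableEq V]
    (w : V → V → ℝ) (hsymm : ∀ u v, w u v = w v u) (hnn : ∀ u v, 0 ≤ w u v)
    (lamb γ : ℝ) (hlam : 0 < lamb) (hγ1 : 1 ≤ γ) (hγ2 : γ < 2)
    (r : ℕ) (C : Finset V) (P : Fin r → Finset V)
    (hCne : C ≠ ∅) (hCpr : C ≠ Finset.univ)
    (hPne : ∀ i, P i ≠ ∅) (hPpr : ∀ i, P i ≠ Finset.univ)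
    (hdCP : ∀ i, Disjoint C (P i))
    (hdPP : ∀ i j, i ≠ j → Disjoint (P i) (P j))
    (hC : lamb ≤ bweight w C) (hP : ∀ i, lamb ≤ bweight w (P i))
    (hCup : ∀ i, bweight w (C ∪ P i) ≤ γ * lamb) :
    (∀ i, (2 - γ) * lamb / 2 ≤ ∑ u ∈ C, ∑ v ∈ P i, w u v) ∧
      (r : ℝ) - 1 ≤ 2 * γ / (2 - γ) := by

  have key : ∀ i, (2 - γ) * lamb / 2 ≤ ∑ u ∈ C, ∑ v ∈ P i, w u v := by
    intro i
    have hdec := bweight_union w hsymm C (P i) (hdCP i)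
    have h1 := hC
    have h2 := hP i
    have h3 := hCup i
    linarith
  refine ⟨key, ?_⟩
  rcases Nat.eq_zero_or_pos r with hr | hr
  · subst hr
    have : 0 ≤ 2 * γ / (2 - γ) := div_nonneg (by linarith) (by linarith)
    simp only [Nat.cast_zero]
    linarith
  · set i : Fin r := ⟨0, hr⟩
    set S := (Finset.univ : Finset (Fin r)).erase i with hS
    have hcard : S.card = r - 1 := by
      rw [hS, Finset.card_erase_of_mem (Finset.mem_univ i), Finset.card_univ, Fintype.card_fin]
    -- each P j for j ∈ S is inside (C ∪ P i)ᶜ, pairwise disjoint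
    have hsub : S.biUnion P ⊆ (C ∪ P i)ᶜ := by
      intro x hx
      rw [Finset.mem_biUnion] at hx
      obtain ⟨j, hj, hxj⟩ := hx
      have hji : j ≠ i := Finset.ne_of_mem_erase hj
      rw [Finset.mem_compl, Finset.mem_union]
      rintro (hxC | hxPi)
      · exact (Finset.disjoint_left.1 (hdCP j)) hxC hxj
      · exact (Finset.disjoint_left.1 (hdPP j i hji)) hxj hxPi
    have hdisj : ∀ j ∈ S, ∀ k ∈ S, j ≠ k → Disjoint (P j) (P k) :=
      fun j _ k _ hjk => hdPP j k hjk
    have hbound : ∑ j ∈ S, ∑ u ∈ C, ∑ v ∈ P j, w u v ≤ γ * lamb := by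
      have heq : ∑ j ∈ S, ∑ u ∈ C, ∑ v ∈ P j, w u v
          = ∑ u ∈ C, ∑ v ∈ S.biUnion P, w u v := by
        rw [Finset.sum_comm]
        exact Finset.sum_congr rfl fun u _ => (Finset.sum_biUnion hdisj).symm
      have hle1 : ∑ u ∈ C, ∑ v ∈ S.biUnion P, w u v
          ≤ ∑ u ∈ C, ∑ v ∈ (C ∪ P i)ᶜ, w u v := by
        apply Finset.sum_le_sum
        intro u _
        exact Finset.sum_le_sum_of_subset_of_nonneg hsub (fun v _ _ => hnn u v)
      have hle2 : ∑ u ∈ C, ∑ v ∈ (C ∪ P i)ᶜ, w u v ≤ bweight w (C ∪ P i) := by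
        unfold bweight
        apply Finset.sum_le_sum_of_subset_of_nonneg Finset.subset_union_left
        intro u _ _
        exact Finset.sum_nonneg fun v _ => hnn u v
      calc _ = _ := heq
        _ ≤ _ := hle1
        _ ≤ _ := hle2
        _ ≤ γ * lamb := hCup i
    have hlow : (S.card : ℝ) * ((2 - γ) * lamb / 2) ≤ ∑ j ∈ S, ∑ u ∈ C, ∑ v ∈ P j, w u v := by
      have := Finset.card_nsmul_le_sum S (fun j => ∑ u ∈ C, ∑ v ∈ P j, w u v)
        ((2 - γ) * lamb / 2) (fun j _ => key j)
      simpa [nsmul_eq_mul] using this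
    have hcardR : (S.card : ℝ) = (r : ℝ) - 1 := by
      rw [hcard, Nat.cast_sub hr, Nat.cast_one]
    rw [hcardR] at hlow
    have hmain : ((r : ℝ) - 1) * ((2 - γ) * lamb / 2) ≤ γ * lamb := le_trans hlow hbound
    rw [le_div_iff₀ (by linarith : (0:ℝ) < 2 - γ)]
    nlinarith [hmain, hlam]
end
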